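/- arXiv:2406.13311 — 8 statements merged into one kernel-verified Lean document; each statement's English description precedes it below -/
import Mathlib

section
/- Let λ > 0 and let h, g be analytic on 𝔻 with h(0) = 0, h'(0) = 1, g(0) = 0, g'(0) = 0. Then the harmonic function f = h + conj∘g belongs to Ω_H^0(λ) if and only if for every ζ ∈ ℂ with |ζ| = 1 the analytic function F_ζ(z) = h(z) + ζ·g(z) belongs to Ω(λ). -/
open Complex

noncomputable section

/-- The open unit disk in the complex plane. -/
def unitDisk : Set ℂ := {z : ℂ | ‖z‖ < 1}

/-- The class `Ω_H^0(λ)` of harmonic mappings `f = h + conj ∘ g`. -/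
def OmegaH0 (lam : ℝ) (h g : ℂ → ℂ) : Prop :=
  AnalyticOnNhd ℂ h unitDisk ∧ AnalyticOnNhd ℂ g unitDisk ∧
    h 0 = 0 ∧ deriv h 0 = 1 ∧ g 0 = 0 ∧ deriv g 0 = 0 ∧
    ∀ z ∈ unitDisk,
      ‖h z - z * deriv h z‖ < lam - ‖g z - z * deriv g z‖

/-- The class `Ω(λ)` of analytic functions. -/
def OmegaA (lam : ℝ) (F : ℂ → ℂ) : Prop :=
  AnalyticOnNhd ℂ F unitDisk ∧ F 0 = 0 ∧ deriv F 0 = 1 ∧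
    ∀ z ∈ unitDisk, ‖F z - z * deriv F z‖ < lam

/-!
For `F_ζ = h + ζ g` the defining quantity splits as
`F_ζ z - z F_ζ' z = (h z - z h' z) + ζ (g z - z g' z)`, and for fixed complex numbers `a, b`
the supremum of `‖a + ζ b‖` over the unit circle is attained and equals `‖a‖ + ‖b‖`
(rotate `b` into the direction of `a`). Hence `‖a‖ + ‖b‖ < λ` holds exactly when
`‖a + ζ b‖ < λ` for every unimodular `ζ`.
-/

theorem exists_norm_eq_one_norm_add_mul_eq (a b : ℂ) :
    ∃ ζ : ℂ, ‖ζ‖ = 1 ∧ ‖a + ζ * b‖ = ‖a‖ + ‖b‖ := by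
  refine ⟨exp ((arg a - arg b : ℝ) * I), norm_exp_ofReal_mul_I _, ?_⟩
  have hrot : exp ((arg a - arg b : ℝ) * I) * b = ‖b‖ * exp (arg a * I) := by
    calc _ = exp ((arg a - arg b : ℝ) * I) * (‖b‖ * exp (arg b * I)) := by
          rw [norm_mul_exp_arg_mul_I]
      _ = _ := by
          rw [mul_left_comm, ← exp_add]
          push_cast
          ring_nf
  calc ‖a + exp ((arg a - arg b : ℝ) * I) * b‖
      = ‖((‖a‖ + ‖b‖ : ℝ) : ℂ) * exp (arg a * I)‖ := by
        rw [hrot, ofReal_add, add_mul, norm_mul_exp_arg_mul_I]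
    _ = ‖a‖ + ‖b‖ := by
        rw [norm_mul, norm_exp_ofReal_mul_I, mul_one, norm_real, Real.norm_eq_abs,
          abs_of_nonneg (by positivity)]

theorem norm_add_mul_le_of_norm_eq_one (a b : ℂ) {ζ : ℂ} (hζ : ‖ζ‖ = 1) :
    ‖a + ζ * b‖ ≤ ‖a‖ + ‖b‖ :=
  calc ‖a + ζ * b‖ ≤ ‖a‖ + ‖ζ * b‖ := norm_add_le _ _
    _ = ‖a‖ + ‖b‖ := by rw [norm_mul, hζ, one_mul]

theorem norm_add_norm_lt_iff_forall_norm_add_mul_lt (a b : ℂ) (r : ℝ) :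
    ‖a‖ + ‖b‖ < r ↔ ∀ ζ : ℂ, ‖ζ‖ = 1 → ‖a + ζ * b‖ < r := by
  refine ⟨fun hr ζ hζ => (norm_add_mul_le_of_norm_eq_one a b hζ).trans_lt hr, fun hr => ?_⟩
  obtain ⟨ζ, hζ, hmax⟩ := exists_norm_eq_one_norm_add_mul_eq a b
  exact hmax ▸ hr ζ hζ

theorem deriv_add_const_mul {𝕜 : Type*} [NontriviallyNormedField 𝕜] {f g : 𝕜 → 𝕜} {z : 𝕜}
    (c : 𝕜) (hf : DifferentiableAt 𝕜 f z) (hg : DifferentiableAt 𝕜 g z) :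
    deriv (fun w => f w + c * g w) z = deriv f z + c * deriv g z :=
  (hf.hasDerivAt.add (hg.hasDerivAt.const_mul c)).deriv

theorem sub_mul_deriv_add_const_mul {𝕜 : Type*} [NontriviallyNormedField 𝕜] {f g : 𝕜 → 𝕜}
    {z : 𝕜} (c : 𝕜) (hf : DifferentiableAt 𝕜 f z) (hg : DifferentiableAt 𝕜 g z) :
    f z + c * g z - z * deriv (fun w => f w + c * g w) z
      = (f z - z * deriv f z) + c * (g z - z * deriv g z) := by
  rw [deriv_add_const_mul c hf hg]
  ring

theorem stmt0_general (lam : ℝ) (h g : ℂ → ℂ)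
    (hh : AnalyticOnNhd ℂ h unitDisk) (hg : AnalyticOnNhd ℂ g unitDisk)
    (h0 : h 0 = 0) (h1 : deriv h 0 = 1) (g0 : g 0 = 0) (g1 : deriv g 0 = 0) :
    OmegaH0 lam h g ↔
      ∀ ζ : ℂ, ‖ζ‖ = 1 → OmegaA lam (fun z => h z + ζ * g z) := by
  have hsplit (ζ : ℂ) {z : ℂ} (hz : z ∈ unitDisk) :=
    sub_mul_deriv_add_const_mul ζ (hh z hz).differentiableAt (hg z hz).differentiableAt
  constructor
  · rintro ⟨-, -, -, -, -, -, hbound⟩ ζ hζ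
    have h0mem : (0 : ℂ) ∈ unitDisk := by simp [unitDisk]
    refine ⟨hh.add (analyticOnNhd_const.mul hg), by simp [h0, g0], ?_, fun z hz => ?_⟩
    · rw [deriv_add_const_mul ζ (hh 0 h0mem).differentiableAt (hg 0 h0mem).differentiableAt,
        h1, g1, mul_zero, add_zero]
    · rw [hsplit ζ hz]
      exact (norm_add_norm_lt_iff_forall_norm_add_mul_lt _ _ _).1
        (by linarith [hbound z hz]) ζ hζ
  · intro hΩ
    refine ⟨hh, hg, h0, h1, g0, g1, fun z hz => ?_⟩
    have hsum := (norm_add_norm_lt_iff_forall_norm_add_mul_lt _ _ lam).2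
      fun ζ hζ => hsplit ζ hz ▸ (hΩ ζ hζ).2.2.2 z hz
    linarith

theorem stmt0 (lam : ℝ) (hlam : 0 < lam) (h g : ℂ → ℂ)
    (hh : AnalyticOnNhd ℂ h unitDisk) (hg : AnalyticOnNhd ℂ g unitDisk)
    (h0 : h 0 = 0) (h1 : deriv h 0 = 1) (g0 : g 0 = 0) (g1 : deriv g 0 = 0) :
    OmegaH0 lam h g ↔
      ∀ ζ : ℂ, ‖ζ‖ = 1 → OmegaA lam (fun z => h z + ζ * g z) :=
  stmt0_general lam h g hh hg h0 h1 g0 g1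
end
end

section
/- Let λ > 0 and let f = h + conj∘g belong to Ω_H^0(λ). Then f is stable harmonic univalent and stable harmonic starlike in |z| < 1/(2λ): for every ζ ∈ ℂ with |ζ| = 1, the map z ↦ h(z) + ζ·conj(g(z)) is injective on the set {z ∈ 𝔻 : |z| < 1/(2λ)} and its image of that set is starlike with respect to the origin (i.e., star-convex with center 0). -/
open Complex

noncomputable section

/-- Compatibility shim: the complex absolute value as an `AbsoluteValue`. -/
def Complex.abs : AbsoluteValue ℂ ℝ where
  toFun := fun z => ‖z‖
  map_mul' := norm_mul
  nonneg' := norm_nonneg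
  eq_zero' := fun _ => norm_eq_zero
  add_le' := norm_add_le

@[simp] lemma Complex.norm_eq_abs (z : ℂ) : ‖z‖ = Complex.abs z := rfl

@[simp] lemma Complex.abs_conj (z : ℂ) : Complex.abs ((starRingEnd ℂ) z) = Complex.abs z :=
  Complex.norm_conj z

@[simp] lemma Complex.abs_abs (z : ℂ) : |Complex.abs z| = Complex.abs z :=
  abs_of_nonneg (norm_nonneg z)

@[simp] lemma Complex.abs_ofReal (r : ℝ) : Complex.abs (r : ℂ) = |r| := Complex.norm_real r

lemma Complex.abs_apply (z : ℂ) : Complex.abs z = Real.sqrt (Complex.normSq z) := rfl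

lemma Complex.sq_abs (z : ℂ) : Complex.abs z ^ 2 = Complex.normSq z := Complex.sq_norm z

lemma Complex.re_le_abs (z : ℂ) : z.re ≤ Complex.abs z := Complex.re_le_norm z

lemma Complex.continuous_abs : Continuous Complex.abs := continuous_norm

open Set Metric

lemma phase_trick (a b : ℂ) : ∃ η : ℂ, Complex.abs η = 1 ∧
    Complex.abs (a + η * b) = Complex.abs a + Complex.abs b := by
  by_cases hb : b = 0
  · exact ⟨1, by simp, by simp [hb]⟩
  by_cases ha : a = 0
  · refine ⟨(starRingEnd ℂ) b / (Complex.abs b : ℂ), ?_, ?_⟩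
    · simp [map_div₀, Complex.abs_conj, Complex.abs_abs,
        div_self (Complex.abs.ne_zero hb)]
    · have h1 : (starRingEnd ℂ) b / (Complex.abs b : ℂ) * b = (Complex.abs b : ℂ) := by
        rw [div_mul_eq_mul_div, mul_comm, Complex.mul_conj', Complex.norm_eq_abs, sq]
        rw [mul_div_assoc, div_self (by exact_mod_cast Complex.abs.ne_zero hb)]
        ring
      rw [ha, zero_add, h1, Complex.abs_ofReal, _root_.abs_of_nonneg (Complex.abs.nonneg b),
        map_zero, zero_add]
  · have haa : (Complex.abs a : ℂ) ≠ 0 := by exact_mod_cast Complex.abs.ne_zero ha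
    have hbb : (Complex.abs b : ℂ) ≠ 0 := by exact_mod_cast Complex.abs.ne_zero hb
    refine ⟨(a * (starRingEnd ℂ) b) / ((Complex.abs a : ℂ) * (Complex.abs b : ℂ)), ?_, ?_⟩
    · simp [map_div₀, map_mul, Complex.abs_conj, Complex.abs_abs]
      exact ⟨ha, hb⟩
    · have hbc : (starRingEnd ℂ) b * b = ((Complex.abs b : ℂ))^2 := by
        rw [mul_comm, Complex.mul_conj', Complex.norm_eq_abs]
      have h1 : a * (starRingEnd ℂ) b / ((Complex.abs a : ℂ) * (Complex.abs b : ℂ)) * b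
          = a * (Complex.abs b : ℂ) / (Complex.abs a : ℂ) := by
        rw [div_mul_eq_mul_div, mul_assoc, hbc, div_eq_div_iff (mul_ne_zero haa hbb) haa]
        ring
      rw [h1]
      have h2' : a + a * (Complex.abs b : ℂ) / (Complex.abs a : ℂ)
          = a * (((Complex.abs a : ℂ) + (Complex.abs b : ℂ))) / (Complex.abs a : ℂ) := by
        field_simp
      rw [h2', map_div₀, map_mul]
      rw [show ((Complex.abs a : ℂ) + (Complex.abs b : ℂ)) = ((Complex.abs a + Complex.abs b : ℝ) : ℂ) by push_cast; ring]
      rw [Complex.abs_ofReal, Complex.abs_ofReal, _root_.abs_of_nonneg (by positivity),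
        _root_.abs_of_nonneg (Complex.abs.nonneg a)]
      rw [mul_comm (Complex.abs a), mul_div_assoc, div_self (Complex.abs.ne_zero ha), mul_one]

lemma unitDisk_eq : unitDisk = Metric.ball (0:ℂ) 1 := by
  ext z; simp [unitDisk, Metric.mem_ball, Complex.dist_eq]

lemma zero_mem_unitDisk : (0:ℂ) ∈ unitDisk := by simp [unitDisk]

variable {lam : ℝ} {h g : ℂ → ℂ}

lemma keyA (hf : OmegaH0 lam h g) {η : ℂ} (hη : Complex.abs η = 1) :
    ∀ z ∈ unitDisk, Complex.abs ((h z - z * deriv h z) + η * (g z - z * deriv g z))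
      ≤ lam * Complex.abs z ^ 2 := by
  obtain ⟨hah, hag, h0, h'0, g0, g'0, hb⟩ := hf
  set φ : ℂ → ℂ := fun z => (h z - z * deriv h z) + η * (g z - z * deriv g z) with hφdef
  have hφa : AnalyticOnNhd ℂ φ unitDisk :=
    ((hah.sub (analyticOnNhd_id.mul hah.deriv)).add
      (analyticOnNhd_const.mul (hag.sub (analyticOnNhd_id.mul hag.deriv))))
  have hφd : DifferentiableOn ℂ φ (ball 0 1) := unitDisk_eq ▸ hφa.differentiableOn
  have φ0 : φ 0 = 0 := by simp [hφdef, h0, g0]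
  have hbd : ∀ z ∈ ball (0:ℂ) 1, Complex.abs (φ z) < lam := by
    intro z hz
    have hz' : z ∈ unitDisk := by rw [unitDisk_eq]; exact hz
    have h1 := hb z hz'
    calc Complex.abs (φ z) ≤ Complex.abs (h z - z * deriv h z)
          + Complex.abs (η * (g z - z * deriv g z)) := Complex.abs.add_le _ _
      _ = Complex.abs (h z - z * deriv h z) + Complex.abs (g z - z * deriv g z) := by
          rw [map_mul, hη, one_mul]
      _ < lam := by simp only [Complex.norm_eq_abs] at h1; linarith
  have maps : MapsTo φ (ball 0 1) (ball (φ 0) lam) := by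
    intro z hz
    rw [φ0, mem_ball, dist_zero_right, Complex.norm_eq_abs]
    exact hbd z hz
  have hv : ∀ z ∈ ball (0:ℂ) 1, Complex.abs (dslope φ 0 z) ≤ lam := by
    intro z hz
    have := Complex.norm_dslope_le_div_of_mapsTo_ball hφd (maps.mono_right ball_subset_closedBall) hz
    simpa [Complex.norm_eq_abs] using this
  -- deriv φ 0 = 0
  have dh' : DifferentiableAt ℂ (deriv h) 0 := (hah.deriv 0 zero_mem_unitDisk).differentiableAt
  have dg' : DifferentiableAt ℂ (deriv g) 0 := (hag.deriv 0 zero_mem_unitDisk).differentiableAt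
  have dh : DifferentiableAt ℂ h 0 := (hah 0 zero_mem_unitDisk).differentiableAt
  have dg : DifferentiableAt ℂ g 0 := (hag 0 zero_mem_unitDisk).differentiableAt
  have Hφ : HasDerivAt φ 0 0 := by
    have Hh : HasDerivAt (fun z => h z - z * deriv h z)
        (deriv h 0 - (1 * deriv h 0 + 0 * deriv (deriv h) 0)) 0 :=
      dh.hasDerivAt.sub ((hasDerivAt_id 0).mul dh'.hasDerivAt)
    have Hg : HasDerivAt (fun z => g z - z * deriv g z)
        (deriv g 0 - (1 * deriv g 0 + 0 * deriv (deriv g) 0)) 0 :=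
      dg.hasDerivAt.sub ((hasDerivAt_id 0).mul dg'.hasDerivAt)
    have := Hh.add (Hg.const_mul η)
    simp at this; exact this
  set v : ℂ → ℂ := dslope φ 0 with hvdef
  have v0 : v 0 = 0 := by rw [hvdef, dslope_same]; simpa using Hφ.deriv
  have hvd : DifferentiableOn ℂ v (ball 0 1) :=
    (differentiableOn_dslope (ball_mem_nhds _ one_pos)).mpr hφd
  have hw : ∀ z ∈ ball (0:ℂ) 1, Complex.abs (dslope v 0 z) ≤ lam := by
    intro z hz
    refine le_of_forall_pos_le_add ?_
    intro ε hε
    have maps2 : MapsTo v (ball 0 1) (ball (v 0) (lam + ε)) := by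
      intro x hx
      rw [v0, mem_ball, dist_zero_right, Complex.norm_eq_abs]
      exact lt_of_le_of_lt (hv x hx) (by linarith)
    have := Complex.norm_dslope_le_div_of_mapsTo_ball hvd (maps2.mono_right ball_subset_closedBall) hz
    simpa [Complex.norm_eq_abs] using this
  intro z hz
  rcases eq_or_ne z 0 with rfl | hz0
  · simp [h0, g0]
  · have hzb : z ∈ ball (0:ℂ) 1 := by rw [← unitDisk_eq]; exact hz
    have e1 : φ z = z * v z := by
      rw [hvdef, dslope_of_ne _ hz0, slope_def_field, φ0, sub_zero, sub_zero]
      field_simp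
    have e2 : v z = z * dslope v 0 z := by
      rw [dslope_of_ne _ hz0, slope_def_field, v0, sub_zero, sub_zero]
      field_simp
    calc Complex.abs (φ z) = Complex.abs z * (Complex.abs z * Complex.abs (dslope v 0 z)) := by
          rw [e1, map_mul, e2, map_mul]
      _ ≤ Complex.abs z * (Complex.abs z * lam) := by
          have hz1 : (0:ℝ) ≤ Complex.abs z := Complex.abs.nonneg z
          exact mul_le_mul_of_nonneg_left (mul_le_mul_of_nonneg_left (hw z hzb) hz1) hz1
      _ = lam * Complex.abs z ^ 2 := by ring

lemma keyB (hf : OmegaH0 lam h g) {η : ℂ} (hη : Complex.abs η = 1) :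
    ∀ z ∈ unitDisk, Complex.abs ((h z - z) + η * g z) ≤ lam * Complex.abs z ^ 2 := by
  obtain ⟨hah, hag, h0, h'0, g0, g'0, hb⟩ := hf
  have hfull : OmegaH0 lam h g := ⟨hah, hag, h0, h'0, g0, g'0, hb⟩
  set ψ : ℂ → ℂ := fun z => (h z - z) + η * g z with hψdef
  have hψa : AnalyticOnNhd ℂ ψ unitDisk :=
    (hah.sub analyticOnNhd_id).add (analyticOnNhd_const.mul hag)
  have hψd : DifferentiableOn ℂ ψ (ball 0 1) := unitDisk_eq ▸ hψa.differentiableOn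
  have ψ0 : ψ 0 = 0 := by simp [hψdef, h0, g0]
  -- derivative of ψ on the disk
  have hψderiv : ∀ z ∈ unitDisk, deriv ψ z = (deriv h z - 1) + η * deriv g z := by
    intro z hz
    have dh : DifferentiableAt ℂ h z := (hah z hz).differentiableAt
    have dg : DifferentiableAt ℂ g z := (hag z hz).differentiableAt
    have : HasDerivAt ψ ((deriv h z - 1) + η * deriv g z) z := by
      have := ((dh.hasDerivAt.sub (hasDerivAt_id z)).add ((dg.hasDerivAt).const_mul η))
      exact this
    exact this.deriv
  -- ψ z - z * deriv ψ z = A + η B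
  have hrel : ∀ z ∈ unitDisk, ψ z - z * deriv ψ z
      = (h z - z * deriv h z) + η * (g z - z * deriv g z) := by
    intro z hz
    rw [hψderiv z hz]
    simp only [hψdef]
    ring
  set u : ℂ → ℂ := dslope ψ 0 with hudef
  have hud : DifferentiableOn ℂ u (ball 0 1) :=
    (differentiableOn_dslope (ball_mem_nhds _ one_pos)).mpr hψd
  have u0 : u 0 = 0 := by
    rw [hudef, dslope_same]
    rw [hψderiv 0 zero_mem_unitDisk, h'0, g'0]
    ring
  -- deriv u bound off 0
  have hderiv_u : ∀ z ∈ ball (0:ℂ) 1, z ≠ 0 → Complex.abs (deriv u z) ≤ lam := by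
    intro z hz hz0
    have hzu : z ∈ unitDisk := by rw [unitDisk_eq]; exact hz
    have heq : u =ᶠ[nhds z] (fun w => ψ w / w) := by
      filter_upwards [isOpen_ne.mem_nhds (x := z) (by exact hz0 : z ≠ (0:ℂ))] with w hw
      rw [hudef, dslope_of_ne _ hw, slope_def_field, ψ0, sub_zero, sub_zero]
    have dψ : DifferentiableAt ℂ ψ z := (hψa z hzu).differentiableAt
    have hdq : HasDerivAt (fun w => ψ w / w)
        ((deriv ψ z * z - ψ z * 1) / z ^ 2) z :=
      dψ.hasDerivAt.div (hasDerivAt_id z) hz0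
    have : deriv u z = (deriv ψ z * z - ψ z * 1) / z ^ 2 := by
      rw [heq.deriv_eq]; exact hdq.deriv
    rw [this]
    rw [map_div₀, map_pow]
    rw [div_le_iff₀ (pow_pos (Complex.abs.pos hz0) 2)]
    have e1 : Complex.abs (deriv ψ z * z - ψ z * 1) = Complex.abs (ψ z - z * deriv ψ z) := by
      rw [← Complex.abs.map_neg]; congr 1; ring
    rw [e1, hrel z hzu]
    exact keyA hfull hη z hzu
  -- deriv u bound everywhere on the ball
  have huan : AnalyticOnNhd ℂ u (ball 0 1) := hud.analyticOnNhd isOpen_ball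
  have hderiv_u' : ∀ z ∈ ball (0:ℂ) 1, Complex.abs (deriv u z) ≤ lam := by
    intro z hz
    rcases eq_or_ne z 0 with rfl | hz0
    · have hcont : ContinuousAt (deriv u) 0 :=
        ((huan.deriv 0 hz).continuousAt)
      have htend : Filter.Tendsto (fun w => Complex.abs (deriv u w)) (nhdsWithin 0 {(0:ℂ)}ᶜ)
          (nhds (Complex.abs (deriv u 0))) :=
        ((Complex.continuous_abs.continuousAt.comp hcont).tendsto).mono_left nhdsWithin_le_nhds
      refine le_of_tendsto htend ?_
      filter_upwards [self_mem_nhdsWithin,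
        nhdsWithin_le_nhds (ball_mem_nhds (0:ℂ) one_pos)] with w hw hwball
      exact hderiv_u w hwball hw
    · exact hderiv_u z hz hz0
  -- MVT
  intro z hz
  have hzb : z ∈ ball (0:ℂ) 1 := by rw [← unitDisk_eq]; exact hz
  have hmvt := Convex.norm_image_sub_le_of_norm_deriv_le (C := lam)
      (fun x hx => (hud.differentiableAt (isOpen_ball.mem_nhds hx)))
      (fun x hx => by simpa [Complex.norm_eq_abs] using hderiv_u' x hx)
      (convex_ball 0 1) (mem_ball_self one_pos) hzb
  rw [u0, sub_zero, sub_zero, Complex.norm_eq_abs, Complex.norm_eq_abs] at hmvt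
  -- |u z| ≤ lam |z| and ψ z = z * u z
  rcases eq_or_ne z 0 with rfl | hz0
  · simp [h0, g0]
  · have e1 : ψ z = z * u z := by
      rw [hudef, dslope_of_ne _ hz0, slope_def_field, ψ0, sub_zero, sub_zero]
      field_simp
    calc Complex.abs (ψ z) = Complex.abs z * Complex.abs (u z) := by rw [e1, map_mul]
      _ ≤ Complex.abs z * (lam * Complex.abs z) := by
          exact mul_le_mul_of_nonneg_left hmvt (Complex.abs.nonneg z)
      _ = lam * Complex.abs z ^ 2 := by ring

lemma sumA (hf : OmegaH0 lam h g) {z : ℂ} (hz : z ∈ unitDisk) :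
    Complex.abs (h z - z * deriv h z) + Complex.abs (g z - z * deriv g z)
      ≤ lam * Complex.abs z ^ 2 := by
  obtain ⟨η, hη, he⟩ := phase_trick (h z - z * deriv h z) (g z - z * deriv g z)
  rw [← he]; exact keyA hf hη z hz

lemma sumB (hf : OmegaH0 lam h g) {z : ℂ} (hz : z ∈ unitDisk) :
    Complex.abs (h z - z) + Complex.abs (g z) ≤ lam * Complex.abs z ^ 2 := by
  obtain ⟨η, hη, he⟩ := phase_trick (h z - z) (g z)
  rw [← he]; exact keyB hf hη z hz

lemma sumD (hf : OmegaH0 lam h g) {z : ℂ} (hz : z ∈ unitDisk) :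
    Complex.abs (deriv h z - 1) + Complex.abs (deriv g z) ≤ 2 * lam * Complex.abs z := by
  rcases eq_or_ne z 0 with rfl | hz0
  · rw [hf.2.2.2.1, hf.2.2.2.2.2.1]
    simp
  · obtain ⟨η, hη, he⟩ := phase_trick (deriv h z - 1) (deriv g z)
    have key : z * ((deriv h z - 1) + η * deriv g z)
        = ((h z - z) + η * g z) - ((h z - z * deriv h z) + η * (g z - z * deriv g z)) := by
      ring
    have hb : Complex.abs z * (Complex.abs (deriv h z - 1) + Complex.abs (deriv g z))
        ≤ 2 * lam * Complex.abs z ^ 2 := by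
      rw [← he, ← map_mul, key]
      calc Complex.abs _ ≤ Complex.abs ((h z - z) + η * g z)
            + Complex.abs ((h z - z * deriv h z) + η * (g z - z * deriv g z)) :=
          by
            rw [sub_eq_add_neg]
            exact (Complex.abs.add_le _ _).trans_eq (by rw [Complex.abs.map_neg])
        _ ≤ lam * Complex.abs z ^ 2 + lam * Complex.abs z ^ 2 :=
          add_le_add (keyB hf hη z hz) (keyA hf hη z hz)
        _ = 2 * lam * Complex.abs z ^ 2 := by ring
    have hzpos : 0 < Complex.abs z := Complex.abs.pos hz0
    nlinarith [hb, hzpos]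

/-- The real-linear map `v ↦ p v + q conj v`. -/
def Tmap (p q : ℂ) : ℂ →L[ℝ] ℂ :=
  p • (ContinuousLinearMap.id ℝ ℂ) + q • (Complex.conjCLE.toContinuousLinearMap)

lemma Tmap_apply (p q v : ℂ) : Tmap p q v = p * v + q * (starRingEnd ℂ) v := by
  simp [Tmap, smul_eq_mul]

lemma Tmap_norm_le (p q : ℂ) : ‖Tmap p q‖ ≤ Complex.abs p + Complex.abs q := by
  refine ContinuousLinearMap.opNorm_le_bound _
    (by positivity) (fun v => ?_)
  rw [Tmap_apply]
  calc ‖p * v + q * (starRingEnd ℂ) v‖ ≤ ‖p * v‖ + ‖q * (starRingEnd ℂ) v‖ := norm_add_le _ _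
    _ = Complex.abs p * ‖v‖ + Complex.abs q * ‖v‖ := by
        simp [Complex.norm_eq_abs, map_mul, Complex.abs_conj]
    _ = (Complex.abs p + Complex.abs q) * ‖v‖ := by ring

variable {lam : ℝ} {h g : ℂ → ℂ} {ζ : ℂ}

lemma hasStrictFDerivAt_F (hah : AnalyticAt ℂ h z) (hag : AnalyticAt ℂ g z) :
    HasStrictFDerivAt (fun z => h z + ζ * (starRingEnd ℂ) (g z))
      (Tmap (deriv h z) (ζ * (starRingEnd ℂ) (deriv g z))) z := by
  have hstr_h : HasStrictFDerivAt h ((fderiv ℂ h z).restrictScalars ℝ) z :=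
    hah.hasStrictFDerivAt.restrictScalars ℝ
  have hstr_g : HasStrictFDerivAt g ((fderiv ℂ g z).restrictScalars ℝ) z :=
    hag.hasStrictFDerivAt.restrictScalars ℝ
  set Q : ℂ →L[ℝ] ℂ := ζ • (Complex.conjCLE.toContinuousLinearMap) with hQ
  have hQap : ∀ w, Q w = ζ * (starRingEnd ℂ) w := by intro w; simp [hQ, smul_eq_mul]
  have hcomp : HasStrictFDerivAt (fun z => ζ * (starRingEnd ℂ) (g z))
      (Q.comp ((fderiv ℂ g z).restrictScalars ℝ)) z := by
    have H := Q.hasStrictFDerivAt.comp z hstr_g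
    have : (fun z => ζ * (starRingEnd ℂ) (g z)) = Q ∘ g := by
      funext w; simp [hQap]
    rw [this]
    exact H
  have := hstr_h.add hcomp
  have hfd : ∀ (f : ℂ → ℂ) (hf : DifferentiableAt ℂ f z) (v : ℂ),
      (fderiv ℂ f z) v = deriv f z * v := by
    intro f hf v
    have : v = v • (1:ℂ) := by simp
    rw [this, map_smul, smul_eq_mul, smul_eq_mul]
    rw [show (fderiv ℂ f z) 1 = deriv f z from rfl]
    ring
  refine this.congr_fderiv ?_
  apply ContinuousLinearMap.ext; intro v
  simp only [ContinuousLinearMap.add_apply, ContinuousLinearMap.coe_comp',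
    Function.comp_apply, ContinuousLinearMap.coe_restrictScalars', Tmap_apply]
  rw [hfd h hah.differentiableAt v, hfd g hag.differentiableAt v, hQap]
  rw [map_mul]
  ring

lemma Tmap_inv_aux {p q : ℂ} (hpq : Complex.normSq q < Complex.normSq p) :
    ∀ v : ℂ, ((Complex.normSq p - Complex.normSq q)⁻¹ : ℝ) •
      (Tmap ((starRingEnd ℂ) p) (-q)) (Tmap p q v) = v := by
  intro v
  have hJ : (Complex.normSq p - Complex.normSq q : ℝ) ≠ 0 := ne_of_gt (by linarith)
  have hJC : ((Complex.normSq p - Complex.normSq q : ℝ) : ℂ) ≠ 0 := by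
    exact_mod_cast hJ
  rw [Tmap_apply, Tmap_apply, Complex.real_smul]
  rw [map_add, map_mul, map_mul, Complex.conj_conj]
  have c1 : (starRingEnd ℂ) p * p = (Complex.normSq p : ℂ) := by
    rw [mul_comm, Complex.mul_conj]
  have c2 : q * (starRingEnd ℂ) q = (Complex.normSq q : ℂ) := Complex.mul_conj q
  have key : (starRingEnd ℂ) p * (p * v + q * (starRingEnd ℂ) v)
      + (-q) * ((starRingEnd ℂ) p * (starRingEnd ℂ) v + (starRingEnd ℂ) q * v)
      = ((Complex.normSq p - Complex.normSq q : ℝ) : ℂ) * v := by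
    push_cast
    linear_combination v * c1 - v * c2
  rw [key, ← mul_assoc, ← Complex.ofReal_mul, inv_mul_cancel₀ hJ, Complex.ofReal_one, one_mul]

lemma Tmap_inv_aux' {p q : ℂ} (hpq : Complex.normSq q < Complex.normSq p) :
    ∀ w : ℂ, (Tmap p q) (((Complex.normSq p - Complex.normSq q)⁻¹ : ℝ) •
      (Tmap ((starRingEnd ℂ) p) (-q)) w) = w := by
  intro w
  have hJ : (Complex.normSq p - Complex.normSq q : ℝ) ≠ 0 := ne_of_gt (by linarith)
  have hJC : ((Complex.normSq p - Complex.normSq q : ℝ) : ℂ) ≠ 0 := by exact_mod_cast hJ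
  have c1 : p * (starRingEnd ℂ) p = (Complex.normSq p : ℂ) := Complex.mul_conj p
  have c2 : q * (starRingEnd ℂ) q = (Complex.normSq q : ℂ) := Complex.mul_conj q
  rw [Tmap_apply, Tmap_apply, Complex.real_smul, Complex.ofReal_inv]
  rw [map_mul, map_inv₀, map_add, map_mul, map_mul, Complex.conj_conj, Complex.conj_conj,
    map_neg, Complex.conj_ofReal]
  have key : p * ((starRingEnd ℂ) p * w + -q * (starRingEnd ℂ) w)
      + q * (p * (starRingEnd ℂ) w + -(starRingEnd ℂ) q * w)
      = ((Complex.normSq p - Complex.normSq q : ℝ) : ℂ) * w := by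
    push_cast
    linear_combination w * c1 - w * c2
  calc p * ((↑(Complex.normSq p - Complex.normSq q))⁻¹ * ((starRingEnd ℂ) p * w + -q * (starRingEnd ℂ) w))
        + q * ((↑(Complex.normSq p - Complex.normSq q))⁻¹ * (p * (starRingEnd ℂ) w + -(starRingEnd ℂ) q * w))
      = (↑(Complex.normSq p - Complex.normSq q))⁻¹ *
        (p * ((starRingEnd ℂ) p * w + -q * (starRingEnd ℂ) w)
          + q * (p * (starRingEnd ℂ) w + -(starRingEnd ℂ) q * w)) := by ring
    _ = w := by rw [key, ← mul_assoc, inv_mul_cancel₀ hJC, one_mul]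

def Emap (p q : ℂ) (hpq : Complex.normSq q < Complex.normSq p) : ℂ ≃L[ℝ] ℂ :=
  ContinuousLinearEquiv.equivOfInverse (Tmap p q)
    (((Complex.normSq p - Complex.normSq q)⁻¹ : ℝ) • Tmap ((starRingEnd ℂ) p) (-q))
    (fun v => by simpa using Tmap_inv_aux hpq v)
    (fun w => by simpa using Tmap_inv_aux' hpq w)

lemma Emap_coe (p q : ℂ) (hpq : Complex.normSq q < Complex.normSq p) :
    ⇑(Emap p q hpq) = ⇑(Tmap p q) := rfl

lemma Emap_symm_apply (p q : ℂ) (hpq : Complex.normSq q < Complex.normSq p) (w : ℂ) :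
    (Emap p q hpq).symm w = ((Complex.normSq p - Complex.normSq q)⁻¹ : ℝ) •
      ((starRingEnd ℂ) p * w + (-q) * (starRingEnd ℂ) w) := by
  have e : (Emap p q hpq).symm w
      = (((Complex.normSq p - Complex.normSq q)⁻¹ : ℝ) • Tmap ((starRingEnd ℂ) p) (-q)) w := rfl
  rw [e, ContinuousLinearMap.smul_apply, Tmap_apply]

lemma Emap_coeL (p q : ℂ) (hpq : Complex.normSq q < Complex.normSq p) :
    ((Emap p q hpq) : ℂ →L[ℝ] ℂ) = Tmap p q := rfl

lemma injOn_F (hlam : 0 < lam) (hf : OmegaH0 lam h g) (hζ : Complex.abs ζ = 1) :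
    Set.InjOn (fun z => h z + ζ * (starRingEnd ℂ) (g z))
      {z | z ∈ unitDisk ∧ Complex.abs z < 1 / (2 * lam)} := by
  intro z₁ hz₁ z₂ hz₂ heq
  by_contra hne
  set m := max (Complex.abs z₁) (Complex.abs z₂) with hm
  have hm1 : m < 1 := max_lt hz₁.1 hz₂.1
  have hm2 : m < 1 / (2 * lam) := max_lt hz₁.2 hz₂.2
  have hC : 2 * lam * m < 1 := by
    rw [lt_div_iff₀ (by positivity)] at hm2
    linarith
  have hCnn : 0 ≤ 2 * lam * m := by
    have : 0 ≤ m := le_max_of_le_left (Complex.abs.nonneg z₁)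
    positivity
  set s := segment ℝ z₁ z₂ with hs
  have hseg : s ⊆ Metric.closedBall (0:ℂ) m := by
    apply (convex_closedBall (0:ℂ) m).segment_subset
    · simp [Metric.mem_closedBall, Complex.dist_eq, hm, le_max_left]
    · simp [Metric.mem_closedBall, Complex.dist_eq, hm, le_max_right]
  have hsub : Metric.closedBall (0:ℂ) m ⊆ unitDisk := by
    intro x hx
    rw [Metric.mem_closedBall, Complex.dist_eq, sub_zero] at hx
    exact lt_of_le_of_lt hx hm1
  have hmvt := Convex.norm_image_sub_le_of_norm_hasFDerivWithin_le
    (f := fun z => (h z + ζ * (starRingEnd ℂ) (g z)) - z)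
    (f' := fun x => Tmap (deriv h x - 1) (ζ * (starRingEnd ℂ) (deriv g x)))
    (s := s) (C := 2 * lam * m) (x := z₁) (y := z₂) ?_ ?_ (convex_segment _ _)
    (left_mem_segment _ _ _) (right_mem_segment _ _ _)
  · have he2 : ((h z₂ + ζ * (starRingEnd ℂ) (g z₂)) - z₂)
        - ((h z₁ + ζ * (starRingEnd ℂ) (g z₁)) - z₁) = z₁ - z₂ := by
      have : (fun z => h z + ζ * (starRingEnd ℂ) (g z)) z₁
          = (fun z => h z + ζ * (starRingEnd ℂ) (g z)) z₂ := heq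
      simp only at this
      rw [← this]; ring
    rw [he2] at hmvt
    have hpos : (0:ℝ) < ‖z₂ - z₁‖ := by
      rw [norm_pos_iff, sub_ne_zero]; exact fun hc => hne hc.symm
    rw [show ‖z₁ - z₂‖ = ‖z₂ - z₁‖ from norm_sub_rev _ _] at hmvt
    nlinarith
  · -- HasFDerivWithinAt
    intro x hx
    have hxu : x ∈ unitDisk := hsub (hseg hx)
    have hah : AnalyticAt ℂ h x := hf.1 x hxu
    have hag : AnalyticAt ℂ g x := hf.2.1 x hxu
    have H1 : HasFDerivAt (fun z => (h z + ζ * (starRingEnd ℂ) (g z)) - z)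
        (Tmap (deriv h x) (ζ * (starRingEnd ℂ) (deriv g x)) - ContinuousLinearMap.id ℝ ℂ) x :=
      ((hasStrictFDerivAt_F hah hag).hasFDerivAt).sub (hasFDerivAt_id x)
    have hTe : Tmap (deriv h x) (ζ * (starRingEnd ℂ) (deriv g x)) - ContinuousLinearMap.id ℝ ℂ
        = Tmap (deriv h x - 1) (ζ * (starRingEnd ℂ) (deriv g x)) := by
      ext v
      simp only [ContinuousLinearMap.sub_apply, ContinuousLinearMap.id_apply, Tmap_apply]
      ring
    rw [hTe] at H1
    exact H1.hasFDerivWithinAt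
  · -- norm bound
    intro x hx
    have hxu : x ∈ unitDisk := hsub (hseg hx)
    have hxm : Complex.abs x ≤ m := by
      have := hseg hx
      rwa [Metric.mem_closedBall, Complex.dist_eq, sub_zero] at this
    refine (Tmap_norm_le _ _).trans ?_
    have : Complex.abs (ζ * (starRingEnd ℂ) (deriv g x)) = Complex.abs (deriv g x) := by
      rw [map_mul, hζ, one_mul, Complex.abs_conj]
    rw [this]
    calc Complex.abs (deriv h x - 1) + Complex.abs (deriv g x) ≤ 2 * lam * Complex.abs x :=
          sumD hf hxu
      _ ≤ 2 * lam * m := by nlinarith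

lemma keyIneq (hlam : 0 < lam) (hf : OmegaH0 lam h g) (hζ : Complex.abs ζ = 1)
    {z : ℂ} (hz : z ∈ unitDisk) (hzr : Complex.abs z < 1 / (2 * lam)) (hz0 : z ≠ 0)
    (hF0 : h z + ζ * (starRingEnd ℂ) (g z) ≠ 0) :
    0 < ((starRingEnd ℂ) z *
      ((starRingEnd ℂ) (deriv h z) * (h z + ζ * (starRingEnd ℂ) (g z))
        + (-(ζ * (starRingEnd ℂ) (deriv g z)))
          * (starRingEnd ℂ) (h z + ζ * (starRingEnd ℂ) (g z)))).re := by
  set F : ℂ := h z + ζ * (starRingEnd ℂ) (g z) with hFdef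
  set A : ℂ := h z - z * deriv h z with hAdef
  set B : ℂ := g z - z * deriv g z with hBdef
  have hζζ : ζ * (starRingEnd ℂ) ζ = 1 := by
    rw [Complex.mul_conj]
    rw [show Complex.normSq ζ = 1 by rw [← Complex.sq_abs, hζ]; norm_num]
    norm_num
  have ezh : (starRingEnd ℂ) z * (starRingEnd ℂ) (deriv h z)
      = (starRingEnd ℂ) (h z) - (starRingEnd ℂ) A := by
    rw [← map_mul, ← map_sub]
    congr 1
    rw [hAdef]; ring
  have ezg : (starRingEnd ℂ) z * (starRingEnd ℂ) (deriv g z)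
      = (starRingEnd ℂ) (g z) - (starRingEnd ℂ) B := by
    rw [← map_mul, ← map_sub]
    congr 1
    rw [hBdef]; ring
  have cF : (starRingEnd ℂ) F = (starRingEnd ℂ) (h z) + (starRingEnd ℂ) ζ * g z := by
    rw [hFdef, map_add, map_mul, Complex.conj_conj]
  have cancel : (starRingEnd ℂ) (h z) * F + (-ζ) * (starRingEnd ℂ) (g z) * (starRingEnd ℂ) F
      = (Complex.normSq (h z) : ℂ) - (Complex.normSq (g z) : ℂ) := by
    rw [cF, hFdef]
    have c1 : h z * (starRingEnd ℂ) (h z) = (Complex.normSq (h z) : ℂ) := Complex.mul_conj _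
    have c2 : g z * (starRingEnd ℂ) (g z) = (Complex.normSq (g z) : ℂ) := Complex.mul_conj _
    linear_combination c1 - c2 - ((starRingEnd ℂ) (g z) * g z) * hζζ
  have eX : (starRingEnd ℂ) z * ((starRingEnd ℂ) (deriv h z) * F
        + (-(ζ * (starRingEnd ℂ) (deriv g z)))* (starRingEnd ℂ) F)
      = ((Complex.normSq (h z) : ℂ) - (Complex.normSq (g z) : ℂ))
        - ((starRingEnd ℂ) A * F + (-ζ) * (starRingEnd ℂ) B * (starRingEnd ℂ) F) := by
    rw [← cancel]
    have expand : (starRingEnd ℂ) z * ((starRingEnd ℂ) (deriv h z) * F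
          + (-(ζ * (starRingEnd ℂ) (deriv g z)))* (starRingEnd ℂ) F)
        = ((starRingEnd ℂ) z * (starRingEnd ℂ) (deriv h z)) * F
          + (-ζ) * ((starRingEnd ℂ) z * (starRingEnd ℂ) (deriv g z)) * (starRingEnd ℂ) F := by
      ring
    rw [expand, ezh, ezg]
    ring
  rw [eX]
  -- real estimates
  set a := Complex.abs (h z) with ha
  set b := Complex.abs (g z) with hb
  set s := Complex.abs z with hs
  set fa := Complex.abs F with hfa
  have hre : (((Complex.normSq (h z) : ℂ) - (Complex.normSq (g z) : ℂ))
      - ((starRingEnd ℂ) A * F + (-ζ) * (starRingEnd ℂ) B * (starRingEnd ℂ) F)).re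
      = (a^2 - b^2) - ((starRingEnd ℂ) A * F + (-ζ) * (starRingEnd ℂ) B * (starRingEnd ℂ) F).re := by
    rw [ha, hb, Complex.sq_abs, Complex.sq_abs]
    simp [Complex.sub_re, Complex.ofReal_re]
  rw [hre]
  have hYle : ((starRingEnd ℂ) A * F + (-ζ) * (starRingEnd ℂ) B * (starRingEnd ℂ) F).re
      ≤ (Complex.abs A + Complex.abs B) * fa := by
    refine (Complex.re_le_abs _).trans ?_
    calc Complex.abs _ ≤ Complex.abs ((starRingEnd ℂ) A * F)
          + Complex.abs ((-ζ) * (starRingEnd ℂ) B * (starRingEnd ℂ) F) := Complex.abs.add_le _ _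
      _ = Complex.abs A * fa + Complex.abs B * fa := by
        rw [map_mul, map_mul, map_mul, Complex.abs_conj, Complex.abs_conj, Complex.abs_conj,
          Complex.abs.map_neg, hζ, one_mul]
      _ = (Complex.abs A + Complex.abs B) * fa := by ring
  have hsumA : Complex.abs A + Complex.abs B ≤ lam * s ^ 2 := sumA hf hz
  have hsumB : Complex.abs (h z - z) + b ≤ lam * s ^ 2 := sumB hf hz
  have htri : s - Complex.abs (h z - z) ≤ a := by
    rw [hs, ha]
    have e : Complex.abs z ≤ Complex.abs (h z) + Complex.abs (h z - z) := by
      calc Complex.abs z = Complex.abs (h z + -(h z - z)) := by congr 1; ring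
        _ ≤ Complex.abs (h z) + Complex.abs (-(h z - z)) := Complex.abs.add_le _ _
        _ = Complex.abs (h z) + Complex.abs (h z - z) := by rw [Complex.abs.map_neg]
    linarith
  have hfab : fa ≤ a + b := by
    rw [hfa, hFdef, ha, hb]
    refine (Complex.abs.add_le _ _).trans ?_
    rw [map_mul, hζ, one_mul, Complex.abs_conj]
  have hfapos : 0 < fa := Complex.abs.pos hF0
  have hspos : 0 < s := Complex.abs.pos hz0
  have h2ls : 2 * lam * s < 1 := by
    rw [lt_div_iff₀ (by positivity)] at hzr
    linarith
  have hAnn : 0 ≤ Complex.abs A := Complex.abs.nonneg _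
  have hBnn : 0 ≤ Complex.abs B := Complex.abs.nonneg _
  have hann : 0 ≤ a := Complex.abs.nonneg _
  have hbnn : 0 ≤ b := Complex.abs.nonneg _
  have hhz : 0 ≤ Complex.abs (h z - z) := Complex.abs.nonneg _
  have key1 : s - lam * s^2 ≤ a - b := by linarith
  have hY2 : ((starRingEnd ℂ) A * F + -ζ * (starRingEnd ℂ) B * (starRingEnd ℂ) F).re
      ≤ lam * s^2 * (a + b) :=
    hYle.trans (mul_le_mul hsumA hfab (le_of_lt hfapos) (by positivity))
  have hab2 : (s - lam * s^2) * (a + b) ≤ a^2 - b^2 := by nlinarith [key1, add_nonneg hann hbnn]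
  have hpos2 : 0 < (s - 2 * lam * s^2) * (a + b) := by
    have h1 : 0 < 1 - 2 * lam * s := by linarith
    have hab : 0 < a + b := lt_of_lt_of_le hfapos hfab
    have e : (s - 2 * lam * s^2) = s * (1 - 2 * lam * s) := by ring
    rw [e]
    exact mul_pos (mul_pos hspos h1) hab
  nlinarith [hY2, hab2, hpos2]

lemma starConvex_F (hlam : 0 < lam) (hf : OmegaH0 lam h g) (hζ : Complex.abs ζ = 1) :
    StarConvex ℝ (0 : ℂ)
      ((fun z => h z + ζ * (starRingEnd ℂ) (g z)) ''
        {z | z ∈ unitDisk ∧ Complex.abs z < 1 / (2 * lam)}) := by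
  set F : ℂ → ℂ := fun z => h z + ζ * (starRingEnd ℂ) (g z) with hFdef
  set D : Set ℂ := {z | z ∈ unitDisk ∧ Complex.abs z < 1 / (2 * lam)} with hDdef
  have hF0 : F 0 = 0 := by simp [hFdef, hf.2.2.1, hf.2.2.2.2.1]
  have hD0 : (0:ℂ) ∈ D := by
    constructor
    · simp [unitDisk]
    · simp; positivity
  intro y hy t1 t2 ht1 ht2 hsum
  rw [smul_zero, zero_add]
  obtain ⟨z₀, hz₀D, hFz₀⟩ := hy
  by_cases hw : F z₀ = 0
  · refine ⟨0, hD0, ?_⟩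
    rw [hF0, ← hFz₀, hw, smul_zero]
  -- main case
  have hz₀0 : z₀ ≠ 0 := fun hc => hw (by rw [hc, hF0])
  set w : ℂ := F z₀ with hwdef
  set aR := Complex.abs z₀ with haRdef
  have haR1 : aR < 1 := hz₀D.1
  have haR2 : aR < 1 / (2 * lam) := hz₀D.2
  set K : Set ℂ := Metric.closedBall (0:ℂ) aR with hKdef
  have hKD : K ⊆ D := by
    intro x hx
    rw [hKdef, Metric.mem_closedBall, Complex.dist_eq, sub_zero] at hx
    exact ⟨lt_of_le_of_lt hx haR1, lt_of_le_of_lt hx haR2⟩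
  have hKU : K ⊆ unitDisk := fun x hx => (hKD hx).1
  have hFcont : ContinuousOn F K := by
    refine ContinuousOn.add (hf.1.continuousOn.mono hKU) ?_
    exact continuousOn_const.mul (Complex.continuous_conj.comp_continuousOn
      (hf.2.1.continuousOn.mono hKU))
  set T : Set ℝ := {t : ℝ | ∃ x ∈ K, F x = t • w} with hTdef
  have hT1 : (1:ℝ) ∈ T := by
    refine ⟨z₀, ?_, by rw [one_smul]⟩
    rw [hKdef, Metric.mem_closedBall, Complex.dist_eq, sub_zero]
    exact le_refl _
  have hTclosed : IsClosed T := by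
    have hTeq : T = (fun t : ℝ => t • w) ⁻¹' (F '' K) := by
      ext t
      simp only [hTdef, Set.mem_setOf_eq, Set.mem_preimage, Set.mem_image]
    rw [hTeq]
    refine IsClosed.preimage (continuous_id.smul continuous_const) ?_
    exact ((isCompact_closedBall _ _).image_of_continuousOn hFcont).isClosed
  -- descent
  have hdesc : ∀ t ∈ Set.Ioc (0:ℝ) 1, t ∈ T →
      ∃ ε > 0, ε < t ∧ Set.Icc (t - ε) t ⊆ T := by
    intro t ht hTt
    obtain ⟨x, hxK, hFx⟩ := hTt
    have hx0 : x ≠ 0 := by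
      intro hc
      rw [hc, hF0] at hFx
      rcases smul_eq_zero.mp hFx.symm with h1 | h2
      · exact (ne_of_gt ht.1) h1
      · exact hw h2
    have hxU : x ∈ unitDisk := hKU hxK
    have hxr : Complex.abs x < 1 / (2 * lam) := (hKD hxK).2
    have hFxne : F x ≠ 0 := by
      rw [hFx]
      exact smul_ne_zero (ne_of_gt ht.1) hw
    -- invertible derivative
    set p := deriv h x with hpdef
    set q := ζ * (starRingEnd ℂ) (deriv g x) with hqdef
    have habsq : Complex.abs q = Complex.abs (deriv g x) := by
      rw [hqdef, map_mul, hζ, one_mul, Complex.abs_conj]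
    have h2ls : 2 * lam * Complex.abs x < 1 := by
      rw [lt_div_iff₀ (by positivity)] at hxr
      linarith
    have habsp : Complex.abs q < Complex.abs p := by
      have hsd := sumD hf hxU
      have htri : 1 - Complex.abs (p - 1) ≤ Complex.abs p := by
        have e : Complex.abs 1 ≤ Complex.abs p + Complex.abs (p - 1) := by
          calc Complex.abs 1 = Complex.abs (p + -(p - 1)) := by congr 1; ring
            _ ≤ Complex.abs p + Complex.abs (-(p-1)) := Complex.abs.add_le _ _
            _ = Complex.abs p + Complex.abs (p-1) := by rw [Complex.abs.map_neg]
        simpa using e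
      rw [habsq]
      linarith
    have hpq : Complex.normSq q < Complex.normSq p := by
      rw [← Complex.sq_abs, ← Complex.sq_abs]
      have := Complex.abs.nonneg q
      nlinarith
    set E := Emap p q hpq with hEdef
    have hstrict : HasStrictFDerivAt F (E : ℂ →L[ℝ] ℂ) x := by
      rw [hEdef, Emap_coeL]
      exact hasStrictFDerivAt_F (hf.1 x hxU) (hf.2.1 x hxU)
    set linv := hstrict.localInverse F E x with hlinvdef
    set c : ℝ → ℂ := fun ε => (t - ε) • w with hcdef
    have hc0 : c 0 = F x := by rw [hcdef]; simp [hFx]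
    set m : ℝ → ℂ := fun ε => linv (c ε) with hmdef
    have hm0 : m 0 = x := by
      rw [hmdef]; simp only [hc0]
      exact hstrict.localInverse_apply_image
    have hcderiv : HasDerivAt c (-w) 0 := by
      have h1 : HasDerivAt (fun ε : ℝ => t - ε) (-1) 0 := (hasDerivAt_id (0:ℝ)).const_sub t
      have h2 : HasDerivAt (fun ε : ℝ => (t - ε) • w) ((-1 : ℝ) • w) 0 := h1.smul_const w
      have h3 : ((-1 : ℝ) • w) = -w := by simp
      rw [hcdef]
      exact h3 ▸ h2
    have hlinderiv : HasFDerivAt linv (E.symm : ℂ →L[ℝ] ℂ) (c 0) := by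
      rw [hc0]
      exact hstrict.to_localInverse.hasFDerivAt
    have hmderiv : HasDerivAt m ((E.symm : ℂ →L[ℝ] ℂ) (-w)) 0 :=
      hlinderiv.comp_hasDerivAt 0 hcderiv
    set d : ℂ := (E.symm : ℂ →L[ℝ] ℂ) (-w) with hddef
    -- the key scalar inequality
    have hu : 0 < ((starRingEnd ℂ) x * (E.symm (F x))).re := by
      rw [hEdef, Emap_symm_apply]
      have hJpos : 0 < Complex.normSq p - Complex.normSq q := by linarith
      rw [mul_smul_comm, Complex.smul_re, smul_eq_mul]
      refine mul_pos (inv_pos.mpr hJpos) ?_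
      exact keyIneq hlam hf hζ hxU hxr hx0 hFxne
    have hud : 0 < ((starRingEnd ℂ) x * ((t:ℝ)⁻¹ • (E.symm (F x)))).re := by
      rw [mul_smul_comm, Complex.smul_re, smul_eq_mul]
      exact mul_pos (inv_pos.mpr ht.1) hu
    have hdval : d = -((t:ℝ)⁻¹ • (E.symm (F x))) := by
      rw [hddef]
      have hwval : w = (t:ℝ)⁻¹ • F x := by
        rw [hFx, smul_smul, inv_mul_cancel₀ (ne_of_gt ht.1), one_smul]
      calc (E.symm : ℂ →L[ℝ] ℂ) (-w) = E.symm (-w) := rfl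
        _ = -(E.symm w) := by rw [map_neg]
        _ = -((t:ℝ)⁻¹ • (E.symm (F x))) := by rw [hwval, map_smul]
    have hdotneg : x.re * d.re + x.im * d.im < 0 := by
      have hcompute : ∀ v : ℂ, ((starRingEnd ℂ) x * v).re = x.re * v.re + x.im * v.im := by
        intro v
        simp only [Complex.mul_re, Complex.conj_re, Complex.conj_im]
        ring
      have := hud
      rw [hcompute] at this
      rw [hdval]
      simp only [Complex.neg_re, Complex.neg_im]
      linarith
    -- derivative of squared norm
    set φ : ℝ → ℝ := fun ε => ((m ε).re)^2 + ((m ε).im)^2 with hφdef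
    have hre : HasDerivAt (fun ε => (m ε).re) d.re 0 := by
      have := (Complex.reCLM.hasFDerivAt.comp 0 hmderiv.hasFDerivAt).hasDerivAt
      simp at this; exact this
    have him : HasDerivAt (fun ε => (m ε).im) d.im 0 := by
      have := (Complex.imCLM.hasFDerivAt.comp 0 hmderiv.hasFDerivAt).hasDerivAt
      simp at this; exact this
    have hφderiv : HasDerivAt φ (2 * (x.re * d.re + x.im * d.im)) 0 := by
      have h1 : HasDerivAt (fun ε => ((m ε).re)^2) (2 * x.re ^ 1 * d.re) 0 := by
        have := hre.pow 2
        rwa [hm0] at this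
      have h2 : HasDerivAt (fun ε => ((m ε).im)^2) (2 * x.im ^ 1 * d.im) 0 := by
        have := him.pow 2
        rwa [hm0] at this
      have := h1.add h2
      rw [hφdef]
      exact this.congr_deriv (by ring)
    have hφ0 : φ 0 = Complex.normSq x := by
      show (m 0).re^2 + (m 0).im^2 = _
      rw [hm0, Complex.normSq_apply]; ring
    -- eventually statements
    have hright := hstrict.eventually_right_inverse
    have hctend : Filter.Tendsto c (nhds 0) (nhds (F x)) := by
      rw [← hc0]
      exact hcderiv.continuousAt.tendsto
    have hroot : ∀ᶠ ε in nhds (0:ℝ), F (m ε) = c ε := by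
      have := hctend.eventually hright
      filter_upwards [this] with ε hε
      exact hε
    have hφlt : ∀ᶠ ε in nhdsWithin (0:ℝ) (Set.Ioi 0), φ ε < φ 0 := by
      have hslope : Filter.Tendsto (slope φ 0) (nhdsWithin 0 {(0:ℝ)}ᶜ)
          (nhds (2 * (x.re * d.re + x.im * d.im))) :=
        hasDerivAt_iff_tendsto_slope.mp hφderiv
      have hneg2 : 2 * (x.re * d.re + x.im * d.im) < 0 := by linarith
      have hev : ∀ᶠ ε in nhdsWithin (0:ℝ) {(0:ℝ)}ᶜ, slope φ 0 ε < 0 :=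
        hslope.eventually (Filter.Tendsto.eventually_lt_const hneg2 Filter.tendsto_id)
      have hmono : nhdsWithin (0:ℝ) (Set.Ioi 0) ≤ nhdsWithin (0:ℝ) {(0:ℝ)}ᶜ := by
        apply nhdsWithin_mono
        intro x hx
        exact ne_of_gt hx
      filter_upwards [hmono hev, self_mem_nhdsWithin] with ε hε hε0
      have hε0' : (0:ℝ) < ε := hε0
      rw [slope_def_field] at hε
      have : (φ ε - φ 0) / (ε - 0) < 0 := hε
      rw [sub_zero] at this
      have := (div_neg_iff.mp this)
      rcases this with ⟨h1, h2⟩ | ⟨h1, h2⟩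
      · linarith
      · linarith
    have hεt : ∀ᶠ ε in nhdsWithin (0:ℝ) (Set.Ioi 0), ε < t :=
      Filter.Eventually.filter_mono nhdsWithin_le_nhds (gt_mem_nhds ht.1)
    have hall : ∀ᶠ ε in nhdsWithin (0:ℝ) (Set.Ioi 0),
        (F (m ε) = c ε ∧ φ ε < φ 0) ∧ ε < t :=
      ((hroot.filter_mono nhdsWithin_le_nhds).and hφlt).and hεt
    rw [Filter.eventually_iff, mem_nhdsGT_iff_exists_Ioc_subset] at hall
    obtain ⟨δ, hδ, hsub⟩ := hall
    rw [Set.mem_Ioi] at hδ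
    refine ⟨min δ (t/2), lt_min hδ (by linarith [ht.1]), ?_, ?_⟩
    · calc min δ (t/2) ≤ t/2 := min_le_right _ _
        _ < t := by linarith [ht.1]
    · intro r hr
      rcases eq_or_lt_of_le hr.2 with rfl | hrt
      · exact ⟨x, hxK, hFx⟩
      · set ε := t - r with hεdef
        have hε1 : ε ∈ Set.Ioc (0:ℝ) δ := by
          constructor
          · rw [hεdef]; linarith
          · have := hr.1
            have h2 : ε ≤ min δ (t/2) := by rw [hεdef]; linarith
            exact h2.trans (min_le_left _ _)
        obtain ⟨⟨hfm, hφm⟩, _⟩ := hsub hε1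
        refine ⟨m ε, ?_, ?_⟩
        · rw [hKdef, Metric.mem_closedBall, Complex.dist_eq, sub_zero]
          have h1 : Complex.normSq (m ε) < Complex.normSq x := by
            have e1 : Complex.normSq (m ε) = φ ε := by
              rw [hφdef, Complex.normSq_apply]; ring_nf
            rw [e1, ← hφ0]
            exact hφm
          have h2 : Complex.abs (m ε) < Complex.abs x := by
            rw [Complex.abs_apply, Complex.abs_apply]
            exact Real.sqrt_lt_sqrt (Complex.normSq_nonneg _) h1
          have h3 : Complex.abs x ≤ aR := by
            have := hxK
            rwa [hKdef, Metric.mem_closedBall, Complex.dist_eq, sub_zero] at this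
          simp only [Complex.norm_eq_abs]; linarith
        · rw [hfm, hcdef]
          simp only [hεdef]
          congr 1
          ring
  -- continuation: Icc 0 1 ⊆ T
  have hIccT : Set.Icc (0:ℝ) 1 ⊆ T := by
    set A : Set ℝ := {r | r ∈ Set.Icc (0:ℝ) 1 ∧ Set.Icc r 1 ⊆ T} with hAdef
    have h1A : (1:ℝ) ∈ A := by
      refine ⟨⟨zero_le_one, le_refl 1⟩, ?_⟩
      intro r hr
      have : r = 1 := le_antisymm hr.2 hr.1
      rw [this]; exact hT1
    have hAne : A.Nonempty := ⟨1, h1A⟩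
    have hAbdd : BddBelow A := ⟨0, fun r hr => hr.1.1⟩
    set cI := sInf A with hcIdef
    have hc0 : 0 ≤ cI := le_csInf hAne (fun r hr => hr.1.1)
    have hc1 : cI ≤ 1 := csInf_le hAbdd h1A
    have hIoc : Set.Ioc cI 1 ⊆ T := by
      intro r hr
      obtain ⟨a', ha'A, ha'r⟩ := exists_lt_of_csInf_lt hAne hr.1
      exact ha'A.2 ⟨le_of_lt ha'r, hr.2⟩
    have hcT : cI ∈ T := by
      rcases eq_or_lt_of_le hc1 with heq | hlt
      · rw [heq]; exact hT1
      · have h1 : cI ∈ closure (Set.Ioc cI 1) := by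
          rw [closure_Ioc (ne_of_lt hlt)]
          exact ⟨le_refl _, le_of_lt hlt⟩
        have h2 : closure (Set.Ioc cI 1) ⊆ closure T := closure_mono hIoc
        rw [hTclosed.closure_eq] at h2
        exact h2 h1
    have hceq : cI = 0 := by
      by_contra hne
      have hcpos : 0 < cI := lt_of_le_of_ne hc0 (Ne.symm hne)
      obtain ⟨ε, hε, hεc, hIccT'⟩ := hdesc cI ⟨hcpos, hc1⟩ hcT
      have hmem : (cI - ε) ∈ A := by
        refine ⟨⟨by linarith, by linarith⟩, ?_⟩
        intro r hr
        rcases le_or_gt r cI with hle | hgt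
        · exact hIccT' ⟨hr.1, hle⟩
        · exact hIoc ⟨hgt, hr.2⟩
      have := csInf_le hAbdd hmem
      linarith
    intro r hr
    rcases eq_or_lt_of_le hr.1 with rfl | hpos
    · rw [← hceq] at *
      exact hcT
    · exact hIoc ⟨by rw [← hceq] at hpos; exact hpos, hr.2⟩
  -- conclude
  have ht2mem : t2 ∈ Set.Icc (0:ℝ) 1 := ⟨ht2, by linarith⟩
  obtain ⟨x, hxK, hFx⟩ := hIccT ht2mem
  refine ⟨x, hKD hxK, ?_⟩
  rw [hFx, hFz₀]

theorem stmt1 (lam : ℝ) (hlam : 0 < lam) (h g : ℂ → ℂ) (hf : OmegaH0 lam h g) :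
    ∀ ζ : ℂ, ‖ζ‖ = 1 →
      Set.InjOn (fun z => h z + ζ * (starRingEnd ℂ) (g z))
        {z | z ∈ unitDisk ∧ ‖z‖ < 1 / (2 * lam)} ∧
      StarConvex ℝ (0 : ℂ)
        ((fun z => h z + ζ * (starRingEnd ℂ) (g z)) ''
          {z | z ∈ unitDisk ∧ ‖z‖ < 1 / (2 * lam)}) := by
  intro ζ hζ
  exact ⟨injOn_F hlam hf hζ, starConvex_F hlam hf hζ⟩
end
end

section
/- Let λ > 0 and let h, g be analytic on 𝔻 with h(0) = 0, h'(0) = 1, g(0) = 0, g'(0) = 0. If for every ζ ∈ ℂ with |ζ| = 1 and every z ∈ 𝔻 one has |h''(z) + ζ·g''(z)| ≤ 2λ, then the harmonic function f = h + conj∘g belongs to Ω_H^0(λ). -/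
open Complex

noncomputable section

lemma key_bound (lam : ℝ) (h g : ℂ → ℂ)
    (hh : AnalyticOnNhd ℂ h unitDisk) (hg : AnalyticOnNhd ℂ g unitDisk)
    (h0 : h 0 = 0) (g0 : g 0 = 0)
    (hbd : ∀ ζ : ℂ, ‖ζ‖ = 1 → ∀ z ∈ unitDisk,
      ‖deriv (deriv h) z + ζ * deriv (deriv g) z‖ ≤ 2 * lam)
    (ζ : ℂ) (hζ : ‖ζ‖ = 1) (z : ℂ) (hz : z ∈ unitDisk) :
    ‖h z + ζ * g z - z * (deriv h z + ζ * deriv g z)‖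
      ≤ lam * (‖z‖) ^ 2 := by
  set φ : ℂ → ℂ := fun w => h w + ζ * g w - w * (deriv h w + ζ * deriv g w) with hφdef
  set D : ℂ → ℂ := fun w => -(w * (deriv (deriv h) w + ζ * deriv (deriv g) w)) with hDdef
  have hφ : ∀ w ∈ unitDisk, HasDerivAt φ (D w) w := by
    intro w hw
    have Hh : HasDerivAt h (deriv h w) w := ((hh w hw).differentiableAt).hasDerivAt
    have Hg : HasDerivAt g (deriv g w) w := ((hg w hw).differentiableAt).hasDerivAt
    have Hh' : HasDerivAt (deriv h) (deriv (deriv h) w) w :=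
      ((hh.deriv w hw).differentiableAt).hasDerivAt
    have Hg' : HasDerivAt (deriv g) (deriv (deriv g) w) w :=
      ((hg.deriv w hw).differentiableAt).hasDerivAt
    have := (Hh.add (Hg.const_mul ζ)).sub
      (((hasDerivAt_id w).mul (Hh'.add (Hg'.const_mul ζ))))
    convert this using 1
    · rfl
    · rfl
    · rfl
    simp only [hDdef, id_eq, Pi.add_apply]
    ring
  have hmem : ∀ t ∈ Set.uIcc (0:ℝ) 1, (t : ℂ) * z ∈ unitDisk := by
    intro t ht
    rw [Set.uIcc_of_le (by norm_num)] at ht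
    have : ‖(t : ℂ) * z‖ = t * ‖z‖ := by
      rw [norm_mul, Complex.norm_real, Real.norm_of_nonneg ht.1]
    rw [unitDisk, Set.mem_setOf_eq, this]
    calc t * ‖z‖ ≤ 1 * ‖z‖ := by
          apply mul_le_mul_of_nonneg_right ht.2 (norm_nonneg z)
      _ = ‖z‖ := one_mul _
      _ < 1 := hz
  have hψ : ∀ t ∈ Set.uIcc (0:ℝ) 1,
      HasDerivAt (fun t : ℝ => φ ((t : ℂ) * z)) (D ((t : ℂ) * z) * z) t := by
    intro t ht
    have hlin : HasDerivAt (fun w : ℂ => w * z) z (t : ℂ) := by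
      simpa using (hasDerivAt_id ((t : ℂ))).mul_const z
    have := ((hφ _ (hmem t ht)).comp (t : ℂ) hlin)
    exact this.comp_ofReal
  -- continuity of the derivative integrand
  have hcont : ContinuousOn (fun t : ℝ => D ((t : ℂ) * z) * z) (Set.uIcc (0:ℝ) 1) := by
    have cD : ContinuousOn D unitDisk := by
      have c1 : ContinuousOn (deriv (deriv h)) unitDisk := (hh.deriv.deriv).continuousOn
      have c2 : ContinuousOn (deriv (deriv g)) unitDisk := (hg.deriv.deriv).continuousOn
      exact ((continuousOn_id.mul ((c1.add (c2.const_smul ζ)).congr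
        (fun w _ => by simp [smul_eq_mul]))).neg).congr (fun w _ => rfl)
    have cmap : ContinuousOn (fun t : ℝ => (t : ℂ) * z) (Set.uIcc (0:ℝ) 1) :=
      (Complex.continuous_ofReal.mul continuous_const).continuousOn
    exact (cD.comp cmap hmem).mul continuousOn_const
  have hint : IntervalIntegrable (fun t : ℝ => D ((t : ℂ) * z) * z)
      MeasureTheory.volume 0 1 := hcont.intervalIntegrable
  have hFTC := intervalIntegral.integral_eq_sub_of_hasDerivAt hψ hint
  have hφ0 : φ ((0 : ℝ) : ℂ) * 0 = 0 := by ring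
  have hval : φ z = ∫ t in (0:ℝ)..1, D ((t : ℂ) * z) * z := by
    rw [hFTC]
    simp [hφdef, h0, g0]
  show ‖φ z‖ ≤ lam * (‖z‖) ^ 2
  rw [hval]
  have hbound : ∀ t ∈ Set.uIcc (0:ℝ) 1,
      ‖D ((t : ℂ) * z) * z‖ ≤ (2 * lam * (‖z‖) ^ 2) * t := by
    intro t ht
    rw [Set.uIcc_of_le (by norm_num)] at ht
    have hb := hbd ζ hζ ((t : ℂ) * z) (hmem t (by rw [Set.uIcc_of_le (by norm_num)]; exact ht))
    have : ‖D ((t : ℂ) * z) * z‖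
        = (t * ‖z‖) *
          ‖deriv (deriv h) ((t:ℂ)*z) + ζ * deriv (deriv g) ((t:ℂ)*z)‖
          * ‖z‖ := by
      simp only [hDdef, norm_mul, norm_neg,
        Complex.norm_real, Real.norm_of_nonneg ht.1]
    rw [this]
    have h1 : (0:ℝ) ≤ t * ‖z‖ := mul_nonneg ht.1 (norm_nonneg z)
    calc (t * ‖z‖) *
          ‖deriv (deriv h) ((t:ℂ)*z) + ζ * deriv (deriv g) ((t:ℂ)*z)‖
          * ‖z‖
        ≤ (t * ‖z‖) * (2 * lam) * ‖z‖ := by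
          apply mul_le_mul_of_nonneg_right _ (norm_nonneg z)
          exact mul_le_mul_of_nonneg_left hb h1
      _ = (2 * lam * (‖z‖) ^ 2) * t := by ring
  have hlam0 : 0 ≤ lam := by
    have := hbd 1 (by simp) 0 (by simp [unitDisk])
    have h0' : (0:ℝ) ≤ ‖deriv (deriv h) 0 + 1 * deriv (deriv g) 0‖ :=
      norm_nonneg _
    linarith
  calc ‖∫ t in (0:ℝ)..1, D ((t : ℂ) * z) * z‖
      ≤ |∫ t in (0:ℝ)..1, (2 * lam * (‖z‖) ^ 2) * t| := by
        have hInt : IntervalIntegrable (fun t : ℝ => (2 * lam * (‖z‖) ^ 2) * t)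
            MeasureTheory.volume 0 1 := (continuous_const.mul continuous_id).intervalIntegrable 0 1
        refine (intervalIntegral.norm_integral_le_of_norm_le zero_le_one ?_ hInt).trans (le_abs_self _)
        filter_upwards with t ht
        exact hbound t (Set.uIoc_subset_uIcc (by rwa [Set.uIoc_of_le zero_le_one]))
    _ = lam * (‖z‖) ^ 2 := by
        rw [intervalIntegral.integral_const_mul, integral_id]
        rw [_root_.abs_of_nonneg (by positivity)]
        ring

theorem stmt4 (lam : ℝ) (hlam : 0 < lam) (h g : ℂ → ℂ)
    (hh : AnalyticOnNhd ℂ h unitDisk) (hg : AnalyticOnNhd ℂ g unitDisk)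
    (h0 : h 0 = 0) (h1 : deriv h 0 = 1) (g0 : g 0 = 0) (g1 : deriv g 0 = 0)
    (hbd : ∀ ζ : ℂ, ‖ζ‖ = 1 → ∀ z ∈ unitDisk,
      ‖deriv (deriv h) z + ζ * deriv (deriv g) z‖ ≤ 2 * lam) :
    OmegaH0 lam h g := by
  refine ⟨hh, hg, h0, h1, g0, g1, ?_⟩
  intro z hz
  set A := h z - z * deriv h z with hA
  set B := g z - z * deriv g z with hB
  have key : ∀ ζ : ℂ, ‖ζ‖ = 1 →
      ‖A + ζ * B‖ ≤ lam * (‖z‖) ^ 2 := by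
    intro ζ hζ
    have := key_bound lam h g hh hg h0 g0 hbd ζ hζ z hz
    have heq : h z + ζ * g z - z * (deriv h z + ζ * deriv g z) = A + ζ * B := by
      rw [hA, hB]; ring
    rwa [heq] at this
  have hsum : ‖A‖ + ‖B‖ ≤ lam * (‖z‖) ^ 2 := by
    by_cases hAB : A = 0 ∨ B = 0
    · have h1 := key 1 (by simp)
      rcases hAB with hA0 | hB0
      · simpa [hA0] using h1
      · simpa [hB0] using h1
    · push_neg at hAB
      obtain ⟨hA0, hB0⟩ := hAB
      set ζ : ℂ := (A * (‖B‖ : ℂ)) / (B * (‖A‖ : ℂ)) with hζdef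
      have habsA : ‖A‖ ≠ 0 := norm_ne_zero_iff.mpr hA0
      have habsB : ‖B‖ ≠ 0 := norm_ne_zero_iff.mpr hB0
      have hζ : ‖ζ‖ = 1 := by
        rw [hζdef, norm_div, norm_mul, norm_mul, Complex.norm_real, Complex.norm_real,
          Real.norm_of_nonneg (norm_nonneg A), Real.norm_of_nonneg (norm_nonneg B)]
        field_simp
      have hval : A + ζ * B = A * (1 + (‖B‖ : ℂ) / (‖A‖ : ℂ)) := by
        rw [hζdef]
        have hBc : B ≠ 0 := hB0
        have hAbs : ((‖A‖ : ℂ)) ≠ 0 := by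
          simpa using habsA
        field_simp
      have : ‖A + ζ * B‖ = ‖A‖ + ‖B‖ := by
        rw [hval, norm_mul]
        have hdd : (0:ℝ) ≤ ‖B‖ / ‖A‖ :=
          div_nonneg (norm_nonneg B) (norm_nonneg A)
        have habs1 : ‖1 + (‖B‖ : ℂ) / (‖A‖ : ℂ)‖
            = 1 + ‖B‖ / ‖A‖ := by
          rw [show (1 + (‖B‖ : ℂ) / (‖A‖ : ℂ))
              = ((1 + ‖B‖ / ‖A‖ : ℝ) : ℂ) by push_cast; ring]
          rw [Complex.norm_real]
          exact Real.norm_of_nonneg (by linarith)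
        rw [habs1]
        field_simp
      rw [← this]
      exact key ζ hζ
  have hlt : lam * (‖z‖) ^ 2 < lam := by
    have h1 : ‖z‖ < 1 := hz
    have h2 : (‖z‖) ^ 2 < 1 := by nlinarith [norm_nonneg z]
    calc lam * (‖z‖) ^ 2 < lam * 1 := by
          exact mul_lt_mul_of_pos_left h2 hlam
      _ = lam := mul_one lam
  linarith
end
end

section
/- Let λ > 0 and let f = h + conj∘g belong to Ω_H^0(λ), where a_n = h^{(n)}(0)/n! and b_n = g^{(n)}(0)/n! are the Taylor coefficients of h and g at 0. Then for every integer n ≥ 2, |a_n| ≤ λ/(n − 1) and |b_n| ≤ λ/(n − 1). -/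
/-!
Write `Φ_F(z) = F(z) - z F'(z)`. Its `n`-th Taylor coefficient at `0` is `(1 - n) a_n`, where `a_n`
is that of `F`. The defining inequality of `Ω_H^0(λ)` bounds both `Φ_h` and `Φ_g` by `λ` on the
unit disk, so Cauchy's estimate on the disk gives `(n - 1) |a_n| ≤ λ`, and likewise for `b_n`.
-/

open Complex

noncomputable section

/-- The `n`-th Taylor coefficient of `f` at the origin. -/
def taylorCoef (f : ℂ → ℂ) (n : ℕ) : ℂ := iteratedDeriv n f 0 / n.factorial

open Metric Filter Topology

theorem iteratedDeriv_sub_mul_deriv {𝕜 : Type*} [NontriviallyNormedField 𝕜] [CompleteSpace 𝕜]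
    {F : 𝕜 → 𝕜} {x : 𝕜} (hF : AnalyticAt 𝕜 F x) (n : ℕ) :
    iteratedDeriv n (fun w => F w - w * deriv F w) x
      = (1 - n) * iteratedDeriv n F x - x * iteratedDeriv (n + 1) F x := by
  have hmul : ContDiffAt 𝕜 n (fun w => w * deriv F w) x :=
    (analyticAt_id.fun_mul hF.deriv).contDiffAt
  rw [iteratedDeriv_fun_sub hF.contDiffAt hmul,
    iteratedDeriv_fun_mul (f := fun w => w) contDiffAt_fun_id hF.deriv.contDiffAt]
  rcases n with _ | n
  · simp
  · rw [Finset.sum_range_succ', Finset.sum_range_succ']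
    simp only [iteratedDeriv_succ', iteratedDeriv_fun_id, Nat.add_eq_zero_iff, one_ne_zero,
      and_false, and_self, ↓reduceIte, Nat.add_eq_right, mul_zero, Nat.reduceSubDiff, zero_mul,
      Finset.sum_const_zero, zero_add, Nat.choose_one_right, Nat.cast_add, Nat.cast_one, mul_one,
      add_tsub_cancel_right, Nat.choose_zero_right, one_mul, tsub_zero]
    ring

theorem norm_iteratedDeriv_le_of_forall_mem_ball_norm_le {E : Type*} [NormedAddCommGroup E]
    [NormedSpace ℂ E] [CompleteSpace E] {f : ℂ → E} {c : ℂ} {R M : ℝ} (n : ℕ) (hR : 0 < R)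
    (hf : DifferentiableOn ℂ f (ball c R)) (hM : ∀ z ∈ ball c R, ‖f z‖ ≤ M) :
    ‖iteratedDeriv n f c‖ ≤ n.factorial * M / R ^ n := by
  have hlim : Tendsto (fun r : ℝ => n.factorial * M / r ^ n) (𝓝[<] R)
      (𝓝 (n.factorial * M / R ^ n)) :=
    (continuousAt_const.div (continuous_pow n).continuousAt
      (pow_ne_zero n hR.ne')).tendsto.mono_left nhdsWithin_le_nhds
  refine ge_of_tendsto hlim ?_
  filter_upwards [Ioo_mem_nhdsLT hR] with r hr
  have hsub : closedBall c r ⊆ ball c R := closedBall_subset_ball hr.2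
  exact norm_iteratedDeriv_le_of_forall_mem_sphere_norm_le n hr.1 (hf.diffContOnCl_ball hsub)
    fun z hz => hM z (hsub (sphere_subset_closedBall hz))

theorem unitDisk_eq_ball : unitDisk = ball 0 1 := by
  ext z
  simp [unitDisk]

theorem norm_taylorCoef_le_of_norm_sub_mul_deriv_le {F : ℂ → ℂ} {M : ℝ}
    (hF : AnalyticOnNhd ℂ F unitDisk) (hM : ∀ z ∈ unitDisk, ‖F z - z * deriv F z‖ ≤ M)
    {n : ℕ} (hn : 2 ≤ n) :
    ‖taylorCoef F n‖ ≤ M / ((n : ℝ) - 1) := by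
  rw [unitDisk_eq_ball] at hF hM
  have hΦ : DifferentiableOn ℂ (fun w => F w - w * deriv F w) (ball 0 1) :=
    (hF.sub (analyticOnNhd_id.mul hF.deriv)).differentiableOn
  have hcauchy := norm_iteratedDeriv_le_of_forall_mem_ball_norm_le n one_pos hΦ hM
  rw [iteratedDeriv_sub_mul_deriv (hF 0 (mem_ball_self one_pos)), zero_mul, sub_zero,
    norm_mul, one_pow, div_one] at hcauchy
  have hn1 : (0 : ℝ) < n - 1 := by
    have : (2 : ℝ) ≤ n := by exact_mod_cast hn
    linarith
  have hnorm : ‖1 - (n : ℂ)‖ = n - 1 := by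
    rw [norm_sub_rev, ← Nat.cast_one, ← Nat.cast_sub (by omega), Complex.norm_natCast,
      Nat.cast_sub (by omega), Nat.cast_one]
  rw [hnorm] at hcauchy
  rw [taylorCoef, norm_div, Complex.norm_natCast, div_le_div_iff₀ (by positivity) hn1]
  linarith

theorem stmt7_general (lam : ℝ) (h g : ℂ → ℂ) (hf : OmegaH0 lam h g) :
    ∀ n : ℕ, 2 ≤ n →
      ‖taylorCoef h n‖ ≤ lam / ((n : ℝ) - 1) ∧
      ‖taylorCoef g n‖ ≤ lam / ((n : ℝ) - 1) := by
  obtain ⟨hh, hg, -, -, -, -, hineq⟩ := hf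
  intro n hn
  constructor
  · refine norm_taylorCoef_le_of_norm_sub_mul_deriv_le hh (fun z hz => ?_) hn
    linarith [hineq z hz, norm_nonneg (g z - z * deriv g z)]
  · refine norm_taylorCoef_le_of_norm_sub_mul_deriv_le hg (fun z hz => ?_) hn
    linarith [hineq z hz, norm_nonneg (h z - z * deriv h z)]

theorem stmt7 (lam : ℝ) (hlam : 0 < lam) (h g : ℂ → ℂ) (hf : OmegaH0 lam h g) :
    ∀ n : ℕ, 2 ≤ n →
      ‖taylorCoef h n‖ ≤ lam / ((n : ℝ) - 1) ∧
      ‖taylorCoef g n‖ ≤ lam / ((n : ℝ) - 1) :=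
  stmt7_general lam h g hf
end
end

section
/- Let λ > 0 and let n ≥ 2 be an integer. Then the coefficient bounds λ/(n−1) are attained: the function f_a(z) = z + (λ/(n−1)) z^n (i.e., h(z) = z + (λ/(n−1)) z^n, g = 0) belongs to Ω_H^0(λ), and the function f_b(z) = z − (λ/(n−1)) conj(z)^n (i.e., h(z) = z, g(z) = −(λ/(n−1)) z^n) belongs to Ω_H^0(λ). -/
open Complex

noncomputable section

lemma deriv_aux (c : ℂ) (n : ℕ) (z : ℂ) :
    deriv (fun z : ℂ => c * z ^ n) z = c * (n * z ^ (n - 1)) := by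
  rw [deriv_const_mul _ (differentiable_pow n).differentiableAt, deriv_pow_field]

lemma abs_key (lam : ℝ) (hlam : 0 < lam) (n : ℕ) (hn : 2 ≤ n) (z : ℂ)
    (hz : ‖z‖ < 1) :
    ‖((lam / ((n : ℝ) - 1) : ℝ) : ℂ) * z ^ n -
      z * (((lam / ((n : ℝ) - 1) : ℝ) : ℂ) * (n * z ^ (n - 1)))‖ < lam := by
  have hn1 : (0 : ℝ) < (n : ℝ) - 1 := by
    have : (2 : ℝ) ≤ (n : ℝ) := by exact_mod_cast hn
    linarith
  have hzn : z * z ^ (n - 1) = z ^ n := by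
    rw [← pow_succ']
    congr 1
    omega
  have heq : ((lam / ((n : ℝ) - 1) : ℝ) : ℂ) * z ^ n -
      z * (((lam / ((n : ℝ) - 1) : ℝ) : ℂ) * (n * z ^ (n - 1)))
      = (((lam / ((n : ℝ) - 1)) * ((n : ℝ) - 1) : ℝ) : ℂ) * (-(z ^ n)) := by
    rw [← hzn]; push_cast; ring
  rw [heq, div_mul_cancel₀ _ (ne_of_gt hn1), norm_mul, norm_neg, norm_pow]
  rw [Complex.norm_real, Real.norm_eq_abs, abs_of_pos hlam]
  have : ‖z‖ ^ n < 1 :=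
    pow_lt_one₀ (norm_nonneg z) hz (by omega)
  calc lam * ‖z‖ ^ n < lam * 1 := mul_lt_mul_of_pos_left this hlam
    _ = lam := mul_one lam

theorem stmt8 (lam : ℝ) (hlam : 0 < lam) (n : ℕ) (hn : 2 ≤ n) :
    OmegaH0 lam (fun z => z + ((lam / ((n : ℝ) - 1) : ℝ) : ℂ) * z ^ n) (fun _ => 0) ∧
    OmegaH0 lam (fun z => z) (fun z => -(((lam / ((n : ℝ) - 1) : ℝ) : ℂ) * z ^ n)) := by
  set c : ℂ := ((lam / ((n : ℝ) - 1) : ℝ) : ℂ) with hc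
  have hderiv1 : ∀ z : ℂ, deriv (fun z : ℂ => z + c * z ^ n) z
      = 1 + c * (n * z ^ (n - 1)) := by
    intro z
    rw [deriv_fun_add differentiableAt_fun_id
      ((differentiable_pow n).differentiableAt.const_mul c), deriv_id'',
      deriv_const_mul _ (differentiable_pow n).differentiableAt, deriv_pow_field]
  have hderiv2 : ∀ z : ℂ, deriv (fun z : ℂ => -(c * z ^ n)) z
      = -(c * (n * z ^ (n - 1))) := by
    intro z
    rw [deriv.fun_neg, deriv_aux]
  have hzero : ((0 : ℂ)) ^ (n - 1) = 0 := by
    apply zero_pow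
    omega
  constructor
  · refine ⟨?_, ?_, ?_, ?_, ?_, ?_, ?_⟩
    · exact fun z _ => (analyticAt_id.add ((analyticAt_const).mul (analyticAt_id.pow n)))
    · exact fun z _ => analyticAt_const
    · simp [zero_pow (by omega : n ≠ 0)]
    · rw [hderiv1]; simp [hzero]
    · rfl
    · simp
    · intro z hz
      rw [hderiv1]
      simp only [map_zero, norm_zero, sub_zero, mul_zero, deriv_const']
      have : z + c * z ^ n - z * (1 + c * (n * z ^ (n - 1)))
          = c * z ^ n - z * (c * (n * z ^ (n - 1))) := by ring
      rw [this]
      exact abs_key lam hlam n hn z hz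
  · refine ⟨?_, ?_, ?_, ?_, ?_, ?_, ?_⟩
    · exact fun z _ => analyticAt_id
    · exact fun z _ => ((analyticAt_const).mul (analyticAt_id.pow n)).neg
    · rfl
    · simp
    · simp [zero_pow (by omega : n ≠ 0)]
    · rw [hderiv2]; simp [hzero]
    · intro z hz
      rw [hderiv2, deriv_id'']
      simp only [mul_one, sub_self, map_zero, norm_zero]
      have : -(c * z ^ n) - z * -(c * (n * z ^ (n - 1)))
          = -(c * z ^ n - z * (c * (n * z ^ (n - 1)))) := by ring
      rw [this, norm_neg]
      have := abs_key lam hlam n hn z hz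
      linarith
end
end

section
/- Let λ > 0, let n ≥ 1 be an integer, and for k = 1, …, n let f_k = h_k + conj∘g_k belong to Ω_H^0(λ). Let t_1, …, t_n ∈ [0,1] with Σ_{k=1}^n t_k = 1. Then the convex combination f = Σ_{k=1}^n t_k f_k, i.e., the harmonic function h + conj∘g with h = Σ_{k=1}^n t_k h_k and g = Σ_{k=1}^n t_k g_k, belongs to Ω_H^0(λ). -/
open Complex

noncomputable section

lemma deriv_comb {n : ℕ} (h : Fin n → ℂ → ℂ) (t : Fin n → ℝ)
    (hA : ∀ k, AnalyticOnNhd ℂ (h k) unitDisk) {z : ℂ} (hz : z ∈ unitDisk) :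
    deriv (fun z => ∑ k, (t k : ℂ) * h k z) z = ∑ k, (t k : ℂ) * deriv (h k) z := by
  rw [deriv_fun_sum (fun k _ =>
    ((hA k z hz).differentiableAt.const_mul _ : DifferentiableAt ℂ (fun z => (t k : ℂ) * h k z) z))]
  exact Finset.sum_congr rfl fun k _ => deriv_const_mul _ (hA k z hz).differentiableAt

theorem stmt11 (lam : ℝ) (hlam : 0 < lam) (n : ℕ) (hn : 1 ≤ n)
    (h g : Fin n → ℂ → ℂ) (t : Fin n → ℝ)
    (ht : ∀ k, t k ∈ Set.Icc (0 : ℝ) 1) (htsum : ∑ k, t k = 1)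
    (hf : ∀ k, OmegaH0 lam (h k) (g k)) :
    OmegaH0 lam (fun z => ∑ k, (t k : ℂ) * h k z)
      (fun z => ∑ k, (t k : ℂ) * g k z) := by
  have hAh := fun k => (hf k).1
  have hAg := fun k => (hf k).2.1
  have hh0 := fun k => (hf k).2.2.1
  have hh'0 := fun k => (hf k).2.2.2.1
  have hg0 := fun k => (hf k).2.2.2.2.1
  have hg'0 := fun k => (hf k).2.2.2.2.2.1
  have hineq := fun k => (hf k).2.2.2.2.2.2
  refine ⟨?_, ?_, ?_, ?_, ?_, ?_, ?_⟩
  · exact fun z hz => Finset.analyticAt_fun_sum _ (fun k _ => (analyticAt_const).mul (hAh k z hz))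
  · exact fun z hz => Finset.analyticAt_fun_sum _ (fun k _ => (analyticAt_const).mul (hAg k z hz))
  · simp [hh0]
  · have h0 : (0 : ℂ) ∈ unitDisk := by simp [unitDisk]
    rw [deriv_comb h t hAh h0]
    simp only [hh'0, mul_one]
    rw [← Complex.ofReal_sum, htsum, Complex.ofReal_one]
  · simp [hg0]
  · have h0 : (0 : ℂ) ∈ unitDisk := by simp [unitDisk]
    rw [deriv_comb g t hAg h0]
    simp [hg'0]
  · intro z hz
    rw [deriv_comb h t hAh hz, deriv_comb g t hAg hz]
    have hrw : ∀ (F : Fin n → ℂ → ℂ),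
        (∑ k, (t k : ℂ) * F k z) - z * ∑ k, (t k : ℂ) * deriv (F k) z
          = ∑ k, (t k : ℂ) * (F k z - z * deriv (F k) z) := by
      intro F
      rw [Finset.mul_sum, ← Finset.sum_sub_distrib]
      exact Finset.sum_congr rfl fun k _ => by ring
    rw [hrw, hrw]
    have habs : ∀ (F : Fin n → ℂ → ℂ),
        ‖∑ k, (t k : ℂ) * (F k z - z * deriv (F k) z)‖
          ≤ ∑ k, t k * ‖F k z - z * deriv (F k) z‖ := by
      intro F
      refine le_trans (norm_sum_le _ _) ?_
      refine Finset.sum_le_sum fun k _ => ?_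
      rw [norm_mul, Complex.norm_real, Real.norm_eq_abs, _root_.abs_of_nonneg (ht k).1]
    have key : (∑ k, t k * ‖h k z - z * deriv (h k) z‖)
        < lam - ∑ k, t k * ‖g k z - z * deriv (g k) z‖ := by
      rw [lt_sub_iff_add_lt, ← Finset.sum_add_distrib]
      have : lam = ∑ k, t k * lam := by
        rw [← Finset.sum_mul, htsum, one_mul]
      rw [this]
      have hne : ∃ k, 0 < t k := by
        by_contra hc
        push_neg at hc
        have : ∑ k, t k = 0 := Finset.sum_eq_zero fun k _ =>
          le_antisymm (hc k) (ht k).1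
        rw [this] at htsum; norm_num at htsum
      obtain ⟨k0, hk0⟩ := hne
      refine Finset.sum_lt_sum (fun k _ => ?_) ⟨k0, Finset.mem_univ k0, ?_⟩
      · rw [← mul_add]
        exact mul_le_mul_of_nonneg_left (by linarith [hineq k z hz]) (ht k).1
      · rw [← mul_add]
        exact (mul_lt_mul_iff_right₀ hk0).2 (by linarith [hineq k0 z hz])
    calc ‖∑ k, (t k : ℂ) * (h k z - z * deriv (h k) z)‖
        ≤ ∑ k, t k * ‖h k z - z * deriv (h k) z‖ := habs h
      _ < lam - ∑ k, t k * ‖g k z - z * deriv (g k) z‖ := key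
      _ ≤ lam - ‖∑ k, (t k : ℂ) * (g k z - z * deriv (g k) z)‖ := by
          linarith [habs g]
end
end

section
/- Let λ > 0 and let f = h + conj∘g belong to Ω_H^0(λ). Then the Jacobian of f satisfies J_f(z) = |h'(z)|² − |g'(z)|² ≤ (1 + 2λ|z|)² for all z ∈ 𝔻. -/
open Complex

noncomputable section

open Metric Set Filter Topology in
lemma key_deriv_bound (lam : ℝ) (h : ℂ → ℂ)
    (hH : DifferentiableOn ℂ h (ball (0:ℂ) 1)) (h0 : h 0 = 0) (h1 : deriv h 0 = 1)
    (hb : ∀ w ∈ ball (0:ℂ) 1, ‖h w - w * deriv h w‖ < lam) :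
    ∀ z ∈ ball (0:ℂ) 1, ‖deriv h z‖ ≤ 1 + 2 * lam * ‖z‖ := by
  have hop : IsOpen (ball (0:ℂ) 1) := isOpen_ball
  have hmem : ball (0:ℂ) 1 ∈ 𝓝 (0:ℂ) := ball_mem_nhds _ one_pos
  have h0mem : (0:ℂ) ∈ ball (0:ℂ) 1 := mem_ball_self one_pos
  have hlam : 0 < lam := by
    have := hb 0 h0mem
    simpa [h0] using this
  have hHa : AnalyticOnNhd ℂ h (ball (0:ℂ) 1) := hH.analyticOnNhd hop
  have hH' : AnalyticOnNhd ℂ (deriv h) (ball (0:ℂ) 1) := hHa.deriv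
  set φ : ℂ → ℂ := fun w => h w - w * deriv h w with hφdef
  have hφa : AnalyticOnNhd ℂ φ (ball (0:ℂ) 1) := fun w hw =>
    (hHa w hw).sub ((analyticAt_id).mul (hH' w hw))
  have hφd : DifferentiableOn ℂ φ (ball (0:ℂ) 1) := hφa.differentiableOn
  have hφ0 : φ 0 = 0 := by simp [hφdef, h0]
  have hdφ0 : deriv φ 0 = 0 := by
    have hd : HasDerivAt (fun w : ℂ => w * deriv h w)
        (1 * deriv h 0 + 0 * deriv (deriv h) 0) 0 :=
      (hasDerivAt_id 0).mul ((hH' 0 h0mem).differentiableAt.hasDerivAt)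
    have hφ' : HasDerivAt φ (deriv h 0 - (1 * deriv h 0 + 0 * deriv (deriv h) 0)) 0 :=
      ((hHa 0 h0mem).differentiableAt.hasDerivAt).sub hd
    simpa using hφ'.deriv
  set χ : ℂ → ℂ := dslope φ 0 with hχdef
  have hχd : DifferentiableOn ℂ χ (ball (0:ℂ) 1) :=
    (Complex.differentiableOn_dslope hmem).mpr hφd
  have hχ0 : χ 0 = 0 := by rw [hχdef, dslope_same, hdφ0]
  set u : ℂ → ℂ := dslope h 0 with hudef
  have hud : DifferentiableOn ℂ u (ball (0:ℂ) 1) :=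
    (Complex.differentiableOn_dslope hmem).mpr hH
  have hu0 : u 0 = 1 := by rw [hudef, dslope_same, h1]
  -- pointwise identity away from 0
  have hpt : ∀ w ∈ ball (0:ℂ) 1, w ≠ 0 → deriv u w = -(dslope χ 0 w) := by
    intro w hw hw0
    have hloc : u =ᶠ[𝓝 w] fun x => x⁻¹ * h x := by
      filter_upwards [eventually_ne_nhds hw0] with x hx
      rw [hudef, dslope_of_ne _ hx, slope_def_field, h0, sub_zero, sub_zero, div_eq_inv_mul]
    have hdh : DifferentiableAt ℂ h w := hH.differentiableAt (hop.mem_nhds hw)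
    have hdx : HasDerivAt (fun x : ℂ => x⁻¹ * h x)
        (-(↑(w^2))⁻¹ * h w + w⁻¹ * deriv h w) w :=
      (hasDerivAt_inv hw0).mul hdh.hasDerivAt
    have : deriv u w = -(w^2)⁻¹ * h w + w⁻¹ * deriv h w := by
      rw [hloc.deriv_eq]; exact hdx.deriv
    have hχ0' : dslope φ 0 0 = 0 := by rw [dslope_same, hdφ0]
    rw [this, hχdef, dslope_of_ne _ hw0, slope_def_field, dslope_of_ne _ hw0, slope_def_field,
      hφ0, hχ0']
    simp only [sub_zero]
    field_simp
    ring
  -- identity theorem extends to 0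
  have hEq : Set.EqOn (deriv u) (fun w => -(dslope χ 0 w)) (ball (0:ℂ) 1) := by
    have hua : AnalyticOnNhd ℂ (deriv u) (ball (0:ℂ) 1) := (hud.analyticOnNhd hop).deriv
    have hχs : AnalyticOnNhd ℂ (fun w => -(dslope χ 0 w)) (ball (0:ℂ) 1) := by
      have := ((Complex.differentiableOn_dslope hmem).mpr hχd).analyticOnNhd hop
      exact fun w hw => (this w hw).neg
    have hhalf : (1/2 : ℂ) ∈ ball (0:ℂ) 1 \ {0} := by
      constructor
      · rw [mem_ball, dist_zero_right]
        norm_num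
      · norm_num
    have hV : IsOpen (ball (0:ℂ) 1 \ {0}) := hop.sdiff isClosed_singleton
    have hev : deriv u =ᶠ[𝓝 (1/2 : ℂ)] fun w => -(dslope χ 0 w) :=
      Filter.eventuallyEq_of_mem (hV.mem_nhds hhalf) (fun x hx => hpt x hx.1 hx.2)
    exact AnalyticOnNhd.eqOn_of_preconnected_of_eventuallyEq hua hχs
      (convex_ball (0:ℂ) 1).isPreconnected hhalf.1 hev
  intro z hz
  have hz1 : ‖z‖ < 1 := by simpa [mem_ball, Complex.dist_eq] using hz
  rcases eq_or_ne z 0 with rfl | hz0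
  · simp [h1]
  have habs0 : 0 < ‖z‖ := norm_pos_iff.mpr hz0
  have main : ∀ r : ℝ, ‖z‖ < r → r < 1 →
      ‖deriv h z‖ ≤ 1 + 2 * (lam / r ^ 3) * ‖z‖ := by
    intro r hr1 hr2
    have hr0 : 0 < r := lt_trans habs0 hr1
    have hsub : ball (0:ℂ) r ⊆ ball (0:ℂ) 1 := ball_subset_ball hr2.le
    have hzr : z ∈ ball (0:ℂ) r := by simpa [mem_ball, Complex.dist_eq] using hr1
    have hμ0 : 0 ≤ lam / r ^ 3 := by positivity
    -- Schwarz 1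
    have hmaps1 : Set.MapsTo φ (ball (0:ℂ) r) (ball (φ 0) lam) := by
      intro w hw
      rw [hφ0, mem_ball, dist_zero_right]
      exact hb w (hsub hw)
    have hS1 : ∀ w ∈ ball (0:ℂ) r, ‖dslope φ 0 w‖ ≤ lam / r := fun w hw =>
      Complex.norm_dslope_le_div_of_mapsTo_ball (hφd.mono hsub) (hmaps1.mono_right ball_subset_closedBall) hw
    -- Schwarz 2
    have hmaps2 : Set.MapsTo χ (ball (0:ℂ) r) (ball (χ 0) (lam / r ^ 2)) := by
      intro w hw
      rw [hχ0, mem_ball, dist_zero_right]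
      refine lt_of_le_of_lt (hS1 w hw) ?_
      rw [div_lt_div_iff₀ hr0 (by positivity)]
      exact mul_lt_mul_of_pos_left (by nlinarith) hlam
    have hS2 : ∀ w ∈ ball (0:ℂ) r, ‖dslope χ 0 w‖ ≤ lam / r ^ 3 := by
      intro w hw
      have := Complex.norm_dslope_le_div_of_mapsTo_ball (hχd.mono hsub) (hmaps2.mono_right ball_subset_closedBall) hw
      have heq : lam / r ^ 2 / r = lam / r ^ 3 := by
        rw [div_div, ← pow_succ]
      rwa [heq] at this
    -- bound on deriv u
    have hdu : ∀ w ∈ ball (0:ℂ) r, ‖deriv u w‖ ≤ lam / r ^ 3 := by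
      intro w hw
      rw [hEq (hsub hw), norm_neg]
      exact hS2 w hw
    -- MVT
    have hMVT : ‖u z - u 0‖ ≤ (lam / r ^ 3) * ‖z - 0‖ :=
      Convex.norm_image_sub_le_of_norm_deriv_le
        (fun x hx => hud.differentiableAt (hop.mem_nhds (hsub hx)))
        hdu (convex_ball _ _) (mem_ball_self hr0) hzr
    have hu_z : ‖u z - 1‖ ≤ (lam / r ^ 3) * ‖z‖ := by
      simpa [hu0, Complex.dist_eq] using hMVT
    have huz_eq : u z = z⁻¹ * h z := by
      rw [hudef, dslope_of_ne _ hz0, slope_def_field, h0, sub_zero, sub_zero, div_eq_inv_mul]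
    have hh_z : ‖h z‖ ≤ ‖z‖ * (1 + (lam / r ^ 3) * ‖z‖) := by
      have hhz : h z = z * u z := by
        rw [huz_eq]
        field_simp
      rw [hhz, norm_mul]
      have huz : ‖u z‖ ≤ 1 + (lam / r ^ 3) * ‖z‖ := by
        calc ‖u z‖ = ‖1 + (u z - 1)‖ := by ring_nf
          _ ≤ ‖1‖ + ‖u z - 1‖ := norm_add_le _ _
          _ ≤ 1 + (lam / r ^ 3) * ‖z‖ := by
              have habs1 : ‖(1:ℂ)‖ = 1 := norm_one
              rw [habs1]
              linarith
      exact mul_le_mul_of_nonneg_left huz (norm_nonneg z)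
    have hφ_z : ‖φ z‖ ≤ (lam / r ^ 3) * ‖z‖ ^ 2 := by
      have h1' : φ z = z * (z * dslope χ 0 z) := by
        have hχ0' : dslope φ 0 0 = 0 := by rw [dslope_same, hdφ0]
        rw [hχdef, dslope_of_ne _ hz0, slope_def_field, dslope_of_ne _ hz0, slope_def_field,
          hφ0, hχ0']
        simp only [sub_zero]
        field_simp
      rw [h1', norm_mul, norm_mul]
      have := hS2 z hzr
      calc ‖z‖ * (‖z‖ * ‖dslope χ 0 z‖)
          ≤ ‖z‖ * (‖z‖ * (lam / r ^ 3)) := by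
            apply mul_le_mul_of_nonneg_left _ (norm_nonneg z)
            exact mul_le_mul_of_nonneg_left this (norm_nonneg z)
        _ = (lam / r ^ 3) * ‖z‖ ^ 2 := by ring
    have hzh' : ‖z‖ * ‖deriv h z‖
        ≤ ‖z‖ * (1 + 2 * (lam / r ^ 3) * ‖z‖) := by
      have hid : z * deriv h z = h z - φ z := by
        simp only [hφdef]
        ring
      calc ‖z‖ * ‖deriv h z‖ = ‖z * deriv h z‖ :=
            (norm_mul _ _).symm
        _ = ‖h z - φ z‖ := by rw [hid]
        _ ≤ ‖h z‖ + ‖φ z‖ := by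
              simpa using norm_sub_le (h z) (φ z)
        _ ≤ ‖z‖ * (1 + (lam / r ^ 3) * ‖z‖)
              + (lam / r ^ 3) * ‖z‖ ^ 2 := add_le_add hh_z hφ_z
        _ = ‖z‖ * (1 + 2 * (lam / r ^ 3) * ‖z‖) := by ring
    exact le_of_mul_le_mul_left hzh' habs0
  -- take r → 1⁻
  have htends : Tendsto (fun r : ℝ => 1 + 2 * (lam / r ^ 3) * ‖z‖)
      (𝓝[<] (1:ℝ)) (𝓝 (1 + 2 * lam * ‖z‖)) := by
    have hc : ContinuousAt (fun r : ℝ => 1 + 2 * (lam / r ^ 3) * ‖z‖) 1 := by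
      apply ContinuousAt.add continuousAt_const
      apply ContinuousAt.mul _ continuousAt_const
      apply ContinuousAt.mul continuousAt_const
      exact ContinuousAt.div continuousAt_const (by fun_prop) (by norm_num)
    have : (fun r : ℝ => 1 + 2 * (lam / r ^ 3) * ‖z‖) 1
        = 1 + 2 * lam * ‖z‖ := by norm_num
    rw [← this]
    exact hc.continuousWithinAt.tendsto
  have hev : ∀ᶠ r in 𝓝[<] (1:ℝ),
      ‖deriv h z‖ ≤ 1 + 2 * (lam / r ^ 3) * ‖z‖ := by
    filter_upwards [Ioo_mem_nhdsLT_of_mem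
      (show (1:ℝ) ∈ Set.Ioc (‖z‖) 1 from ⟨hz1, le_refl 1⟩)] with r hr
    exact main r hr.1 hr.2
  exact ge_of_tendsto htends hev

theorem stmt12 (lam : ℝ) (hlam : 0 < lam) (h g : ℂ → ℂ) (hf : OmegaH0 lam h g) :
    ∀ z ∈ unitDisk,
      ‖deriv h z‖ ^ 2 - ‖deriv g z‖ ^ 2 ≤
        (1 + 2 * lam * ‖z‖) ^ 2 := by
  obtain ⟨hH, -, h0, h1, -, -, hb⟩ := hf
  have hset : unitDisk = Metric.ball (0:ℂ) 1 := by
    ext w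
    simp [unitDisk, Metric.mem_ball, Complex.dist_eq]
  rw [hset] at hH hb ⊢
  intro z hz
  have hkey := key_deriv_bound lam h hH.differentiableOn h0 h1
    (fun w hw => lt_of_lt_of_le (hb w hw)
      (sub_le_self _ (norm_nonneg _))) z hz
  have h2 : ‖deriv h z‖ ^ 2 ≤ (1 + 2 * lam * ‖z‖) ^ 2 :=
    pow_le_pow_left₀ (norm_nonneg _) hkey 2
  have h3 : 0 ≤ ‖deriv g z‖ ^ 2 := sq_nonneg _
  linarith
end
end

section
/- Let λ > 0 and let f = h + conj∘g belong to Ω_H^0(λ). Then f is Lipschitz on 𝔻 with constant 1 + 2λ: for all z₁, z₂ ∈ 𝔻, |f(z₁) − f(z₂)| ≤ (1 + 2λ)|z₁ − z₂|; in particular, f is uniformly continuous on 𝔻. -/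
open Complex

noncomputable section

section Helpers
open Metric Set Filter
open scoped Topology
lemma exists_phase (w : ℂ) : ∃ a : ℂ, ‖a‖ = 1 ∧ a * w = (‖w‖ : ℂ) := by
  rcases eq_or_ne w 0 with rfl | hw
  · exact ⟨1, by simp⟩
  · refine ⟨(starRingEnd ℂ) w / (‖w‖ : ℂ), ?_, ?_⟩
    · rw [norm_div, Complex.norm_conj, Complex.norm_real, norm_norm,
        div_self (norm_ne_zero_iff.mpr hw)]
    · have h1 : (starRingEnd ℂ) w * w = ((‖w‖ : ℂ)) * ((‖w‖ : ℂ)) := by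
        rw [← Complex.normSq_eq_conj_mul_self, Complex.normSq_eq_norm_sq]; push_cast; ring
      have h2 : (‖w‖ : ℂ) ≠ 0 := by
        simpa using norm_ne_zero_iff.mpr hw
      field_simp
      rw [h1]; ring
lemma schwarz_two {lam : ℝ} {H : ℂ → ℂ} (hd : DifferentiableOn ℂ H (ball (0:ℂ) 1))
    (h0 : H 0 = 0) (h0' : deriv H 0 = 0)
    (hb : ∀ z ∈ ball (0:ℂ) 1, ‖H z‖ < lam)
    {z : ℂ} (hz : z ∈ ball (0:ℂ) 1) :
    ‖H z‖ ≤ lam * ‖z‖ ^ 2 := by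
  have hlam : 0 < lam := by
    have := hb 0 (by simp)
    simpa [h0] using this
  rcases eq_or_ne z 0 with rfl | hz0
  · simp only [h0, norm_zero]; positivity
  have habs : 0 < ‖z‖ := norm_pos_iff.mpr hz0
  have hz1 : ‖z‖ < 1 := by simpa [Complex.dist_eq] using hz
  have key : ∀ r : ℝ, ‖z‖ < r → r < 1 →
      ‖H z‖ ≤ lam / r ^ 2 * ‖z‖ ^ 2 := by
    intro r hrz hr1
    have hr0 : 0 < r := lt_trans habs hrz
    set H₁ := dslope H 0 with hH₁
    have hd1 : DifferentiableOn ℂ H₁ (ball (0:ℂ) 1) :=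
      (differentiableOn_dslope (ball_mem_nhds _ one_pos)).2 hd
    have step1 : ∀ s : ℝ, 0 < s → s ≤ 1 → ∀ w ∈ ball (0:ℂ) s, ‖H₁ w‖ ≤ lam / s := by
      intro s hs0 hs1 w hw
      refine Complex.norm_dslope_le_div_of_mapsTo_ball (hd.mono (ball_subset_ball hs1)) ?_ hw
      intro x hx
      have : ‖H x‖ < lam := hb x (ball_subset_ball hs1 hx)
      simpa [h0, Complex.dist_eq] using this.le
    set r' := (r + 1) / 2 with hr'
    have hrr' : r < r' := by rw [hr']; linarith
    have hr'1 : r' ≤ 1 := by rw [hr']; linarith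
    have maps1 : MapsTo H₁ (ball (0:ℂ) r) (ball (H₁ 0) (lam / r)) := by
      intro w hw
      have h1 : ‖H₁ w‖ ≤ lam / r' := step1 r' (lt_trans hr0 hrr') hr'1 w
        ((ball_subset_ball hrr'.le) hw)
      have h2 : lam / r' < lam / r := div_lt_div_of_pos_left hlam hr0 hrr'
      have h3 : H₁ 0 = 0 := by rw [hH₁, dslope_same, h0']
      rw [h3, mem_ball, dist_zero_right]
      exact lt_of_le_of_lt h1 h2
    have hzr : z ∈ ball (0:ℂ) r := by simpa [Complex.dist_eq] using hrz
    have step2 : ‖dslope H₁ 0 z‖ ≤ lam / r / r :=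
      Complex.norm_dslope_le_div_of_mapsTo_ball
        (hd1.mono (ball_subset_ball (le_of_lt hr1))) (maps1.mono_right ball_subset_closedBall) hzr
    have e1 : H₁ z = z⁻¹ * H z := by
      rw [hH₁, dslope_of_ne _ hz0, slope_def_field, div_eq_inv_mul, h0, sub_zero, sub_zero]
    have e2 : dslope H₁ 0 z = z⁻¹ * H₁ z := by
      have h3 : H₁ 0 = 0 := by rw [hH₁, dslope_same, h0']
      rw [dslope_of_ne _ hz0, slope_def_field, div_eq_inv_mul, h3, sub_zero, sub_zero]
    have e3 : ‖dslope H₁ 0 z‖ = ‖H z‖ / ‖z‖ ^ 2 := by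
      rw [e2, e1, norm_mul, norm_mul, norm_inv]
      field_simp
    rw [e3] at step2
    rw [div_le_iff₀ (by positivity)] at step2
    calc ‖H z‖ = ‖H z‖ := rfl
      _ ≤ lam / r / r * ‖z‖ ^ 2 := step2
      _ = lam / r ^ 2 * ‖z‖ ^ 2 := by ring
  -- now take the limit r → 1⁻
  have tends : Tendsto (fun r : ℝ => lam / r ^ 2 * ‖z‖ ^ 2) (𝓝[<] 1)
      (𝓝 (lam * ‖z‖ ^ 2)) := by
    have : ContinuousAt (fun r : ℝ => lam / r ^ 2 * ‖z‖ ^ 2) 1 := by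
      fun_prop (disch := norm_num)
    have h := this.tendsto.mono_left (nhdsWithin_le_nhds (s := Iio (1:ℝ)))
    simpa using h
  refine ge_of_tendsto tends ?_
  filter_upwards [Ioo_mem_nhdsLT_of_mem ⟨hz1, le_rfl⟩] with r hr
  exact key r hr.1 hr.2
lemma joint_schwarz_two {lam : ℝ} {F G : ℂ → ℂ}
    (hF : DifferentiableOn ℂ F (ball (0:ℂ) 1)) (hG : DifferentiableOn ℂ G (ball (0:ℂ) 1))
    (hF0 : F 0 = 0) (hF0' : deriv F 0 = 0) (hG0 : G 0 = 0) (hG0' : deriv G 0 = 0)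
    (hb : ∀ z ∈ ball (0:ℂ) 1, ‖F z‖ + ‖G z‖ < lam)
    {z : ℂ} (hz : z ∈ ball (0:ℂ) 1) :
    ‖F z‖ + ‖G z‖ ≤ lam * ‖z‖ ^ 2 := by
  obtain ⟨a, ha1, ha⟩ := exists_phase (F z)
  obtain ⟨b, hb1, hbe⟩ := exists_phase (G z)
  set H : ℂ → ℂ := fun w => a * F w + b * G w with hH
  have hdF : DifferentiableAt ℂ F 0 := hF.differentiableAt (ball_mem_nhds _ one_pos)
  have hdG : DifferentiableAt ℂ G 0 := hG.differentiableAt (ball_mem_nhds _ one_pos)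
  have hd : DifferentiableOn ℂ H (ball (0:ℂ) 1) :=
    ((hF.const_mul a).add (hG.const_mul b))
  have h0 : H 0 = 0 := by simp [hH, hF0, hG0]
  have h0' : deriv H 0 = 0 := by
    rw [hH]
    rw [deriv_fun_add ((hdF.const_mul a)) ((hdG.const_mul b)), deriv_const_mul a hdF,
      deriv_const_mul b hdG, hF0', hG0']
    ring
  have hball : ∀ w ∈ ball (0:ℂ) 1, ‖H w‖ < lam := by
    intro w hw
    calc ‖H w‖ ≤ ‖a * F w‖ + ‖b * G w‖ :=
          norm_add_le _ _
      _ = ‖F w‖ + ‖G w‖ := by rw [norm_mul, norm_mul, ha1, hb1, one_mul, one_mul]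
      _ < lam := hb w hw
  have := schwarz_two hd h0 h0' hball hz
  have hHz : H z = ((‖F z‖ + ‖G z‖ : ℝ) : ℂ) := by
    rw [hH]; push_cast; rw [ha, hbe]
  rw [hHz] at this
  rwa [Complex.norm_real, Real.norm_eq_abs, _root_.abs_of_nonneg (by positivity)] at this
lemma analyticOnNhd_dslope {h : ℂ → ℂ} {s : Set ℂ} (hh : AnalyticOnNhd ℂ h s) :
    AnalyticOnNhd ℂ (dslope h 0) s := by
  intro z hz
  rcases eq_or_ne z 0 with rfl | hz0
  · obtain ⟨p, hp⟩ := hh 0 hz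
    exact ⟨p.fslope, hp.has_fpower_series_dslope_fslope⟩
  · have h1 : AnalyticAt ℂ (fun w => (w - 0)⁻¹ • (h w - h 0)) z := by
      apply AnalyticAt.fun_smul
      · exact ((analyticAt_id.sub analyticAt_const).inv (by simpa using hz0))
      · exact (hh z hz).sub analyticAt_const
    refine h1.congr ?_
    filter_upwards [isOpen_ne.mem_nhds hz0] with w hw
    rw [dslope_of_ne _ hw, slope]
    rfl
lemma harm_lipschitz {h g : ℂ → ℂ} {s : Set ℂ} (hs : Convex ℝ s)
    (hh : ∀ x ∈ s, DifferentiableAt ℂ h x) (hg : ∀ x ∈ s, DifferentiableAt ℂ g x)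
    {C : ℝ} (hC : ∀ x ∈ s, ‖deriv h x‖ + ‖deriv g x‖ ≤ C)
    {x y : ℂ} (hx : x ∈ s) (hy : y ∈ s) :
    ‖(h y + (starRingEnd ℂ) (g y)) - (h x + (starRingEnd ℂ) (g x))‖ ≤
      C * ‖y - x‖ := by
  set conjCLM : ℂ →L[ℝ] ℂ := Complex.conjCLE.toContinuousLinearMap with hconj
  set f' : ℂ → (ℂ →L[ℝ] ℂ) := fun w =>
    ((ContinuousLinearMap.smulRight (1 : ℂ →L[ℂ] ℂ) (deriv h w)).restrictScalars ℝ) +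
      conjCLM.comp ((ContinuousLinearMap.smulRight (1 : ℂ →L[ℂ] ℂ) (deriv g w)).restrictScalars ℝ)
    with hf'
  have hder : ∀ w ∈ s, HasFDerivWithinAt (fun z => h z + (starRingEnd ℂ) (g z)) (f' w) s w := by
    intro w hw
    have h1 : HasFDerivAt h ((ContinuousLinearMap.smulRight (1 : ℂ →L[ℂ] ℂ) (deriv h w)).restrictScalars ℝ) w :=
      ((hh w hw).hasDerivAt.hasFDerivAt).restrictScalars ℝ
    have h2 : HasFDerivAt (fun z => (starRingEnd ℂ) (g z))
        (conjCLM.comp ((ContinuousLinearMap.smulRight (1 : ℂ →L[ℂ] ℂ) (deriv g w)).restrictScalars ℝ)) w := by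
      have h3 : HasFDerivAt g ((ContinuousLinearMap.smulRight (1 : ℂ →L[ℂ] ℂ) (deriv g w)).restrictScalars ℝ) w :=
        ((hg w hw).hasDerivAt.hasFDerivAt).restrictScalars ℝ
      exact (conjCLM.hasFDerivAt.comp w h3)
    exact ((h1.add h2).hasFDerivWithinAt)
  have hbound : ∀ w ∈ s, ‖f' w‖ ≤ C := by
    intro w hw
    refine ContinuousLinearMap.opNorm_le_bound _ (le_trans (by positivity) (hC w hw)) ?_
    intro v
    have : f' w v = deriv h w * v + (starRingEnd ℂ) (deriv g w * v) := by
      simp [hf', hconj, smul_eq_mul, mul_comm]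
    rw [this]
    calc ‖deriv h w * v + (starRingEnd ℂ) (deriv g w * v)‖
        ≤ ‖deriv h w * v‖ + ‖(starRingEnd ℂ) (deriv g w * v)‖ := norm_add_le _ _
      _ = ‖deriv h w‖ * ‖v‖ + ‖deriv g w‖ * ‖v‖ := by
          simp [norm_mul]
      _ = (‖deriv h w‖ + ‖deriv g w‖) * ‖v‖ := by ring
      _ ≤ C * ‖v‖ := by
          have := hC w hw
          have h4 : (0:ℝ) ≤ ‖v‖ := norm_nonneg v
          nlinarith
  have := hs.norm_image_sub_le_of_norm_hasFDerivWithin_le hder hbound hx hy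
  simpa using this

lemma lipschitz_of_deriv_bound {f : ℂ → ℂ} {s : Set ℂ} (hs : Convex ℝ s)
    (hf : ∀ x ∈ s, DifferentiableAt ℂ f x)
    {C : ℝ} (hC : ∀ x ∈ s, ‖deriv f x‖ ≤ C)
    {x y : ℂ} (hx : x ∈ s) (hy : y ∈ s) :
    ‖f y - f x‖ ≤ C * ‖y - x‖ := by
  have := harm_lipschitz (g := fun _ => (0:ℂ)) hs hf (fun x _ => differentiableAt_const 0)
    (C := C) (fun w hw => by simpa using hC w hw) hx hy
  simpa using this

end Helpers

section Main
open Metric Set Filter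
open scoped Topology

theorem stmt13 (lam : ℝ) (hlam : 0 < lam) (h g : ℂ → ℂ) (hf : OmegaH0 lam h g) :
    (∀ z₁ ∈ unitDisk, ∀ z₂ ∈ unitDisk,
      ‖(h z₁ + (starRingEnd ℂ) (g z₁)) - (h z₂ + (starRingEnd ℂ) (g z₂))‖ ≤
        (1 + 2 * lam) * ‖z₁ - z₂‖) ∧
    UniformContinuousOn (fun z => h z + (starRingEnd ℂ) (g z)) unitDisk := by
  obtain ⟨hh, hg, h0, h'0, g0, g'0, hcond⟩ := hf
  have hdisk : unitDisk = ball (0:ℂ) 1 := by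
    ext z; simp [unitDisk, Complex.dist_eq]
  have h0mem : (0:ℂ) ∈ unitDisk := by simp [unitDisk]
  have hopen : IsOpen unitDisk := hdisk ▸ isOpen_ball
  have hconv : Convex ℝ unitDisk := hdisk ▸ convex_ball 0 1
  set F : ℂ → ℂ := fun z => h z - z * deriv h z with hF
  set G : ℂ → ℂ := fun z => g z - z * deriv g z with hG
  have hh' : AnalyticOnNhd ℂ (deriv h) unitDisk := hh.deriv
  have hg' : AnalyticOnNhd ℂ (deriv g) unitDisk := hg.deriv
  have hFan : AnalyticOnNhd ℂ F unitDisk := hh.sub (analyticOnNhd_id.mul hh')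
  have hGan : AnalyticOnNhd ℂ G unitDisk := hg.sub (analyticOnNhd_id.mul hg')
  -- derivatives of F, G at 0 vanish
  have derivF0 : ∀ (k : ℂ → ℂ), AnalyticOnNhd ℂ k unitDisk →
      deriv (fun z => k z - z * deriv k z) 0 = 0 := by
    intro k hk
    have d1 : DifferentiableAt ℂ k 0 := (hk 0 h0mem).differentiableAt
    have d2 : DifferentiableAt ℂ (deriv k) 0 := (hk.deriv 0 h0mem).differentiableAt
    have d3 : DifferentiableAt ℂ (fun z : ℂ => z * deriv k z) 0 :=
      differentiableAt_fun_id.mul d2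
    rw [deriv_fun_sub d1 d3, deriv_fun_mul differentiableAt_fun_id d2]
    simp
  -- joint Schwarz bound for F, G
  have bound1 : ∀ z ∈ unitDisk,
      ‖F z‖ + ‖G z‖ ≤ lam * ‖z‖ ^ 2 := by
    intro z hz
    rw [hdisk] at hz
    refine joint_schwarz_two (hdisk ▸ hFan.differentiableOn) (hdisk ▸ hGan.differentiableOn)
      (by simp [hF, h0]) (derivF0 h hh) (by simp [hG, g0]) (derivF0 g hg) ?_ hz
    intro w hw
    have := hcond w (hdisk ▸ hw)
    linarith
  -- dslope functions
  set P : ℂ → ℂ := dslope h 0 with hP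
  set Q : ℂ → ℂ := dslope g 0 with hQ
  have hPan : AnalyticOnNhd ℂ P unitDisk := analyticOnNhd_dslope hh
  have hQan : AnalyticOnNhd ℂ Q unitDisk := analyticOnNhd_dslope hg
  have hP0 : P 0 = 1 := by rw [hP, dslope_same, h'0]
  have hQ0 : Q 0 = 0 := by rw [hQ, dslope_same, g'0]
  -- values of P, Q away from zero
  have hPval : ∀ z : ℂ, z ≠ 0 → h z = z * P z := by
    intro z hz0
    rw [hP, dslope_of_ne _ hz0, slope_def_field, h0, sub_zero, sub_zero]
    field_simp
  have hQval : ∀ z : ℂ, z ≠ 0 → g z = z * Q z := by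
    intro z hz0
    rw [hQ, dslope_of_ne _ hz0, slope_def_field, g0, sub_zero, sub_zero]
    field_simp
  -- derivative formula for dslope away from zero
  have derivP : ∀ (k : ℂ → ℂ), AnalyticOnNhd ℂ k unitDisk → k 0 = 0 →
      ∀ z ∈ unitDisk, z ≠ 0 →
      deriv (dslope k 0) z = -(k z - z * deriv k z) / z ^ 2 := by
    intro k hk k0 z hz hz0
    have ev : dslope k 0 =ᶠ[𝓝 z] fun w => w⁻¹ * k w := by
      filter_upwards [isOpen_ne.mem_nhds hz0] with w hw
      rw [dslope_of_ne _ hw, slope_def_field, k0, sub_zero, sub_zero, div_eq_inv_mul]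
    rw [ev.deriv_eq]
    have hd : HasDerivAt (fun w => w⁻¹ * k w)
        (-(z ^ 2)⁻¹ * k z + z⁻¹ * deriv k z) z :=
      (hasDerivAt_inv hz0).mul ((hk z hz).differentiableAt.hasDerivAt)
    rw [hd.deriv]
    field_simp
    ring
  -- bound on |P'| + |Q'|
  have bound2 : ∀ z ∈ unitDisk,
      ‖deriv P z‖ + ‖deriv Q z‖ ≤ lam := by
    intro z hz
    rcases eq_or_ne z 0 with rfl | hz0
    · -- continuity argument
      have hcP : ContinuousAt (deriv P) 0 := ((hPan.deriv) 0 h0mem).continuousAt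
      have hcQ : ContinuousAt (deriv Q) 0 := ((hQan.deriv) 0 h0mem).continuousAt
      have hφ : Tendsto (fun w => ‖deriv P w‖ + ‖deriv Q w‖)
          (𝓝[≠] (0:ℂ))
          (𝓝 (‖deriv P 0‖ + ‖deriv Q 0‖)) := by
        exact ((continuous_norm.continuousAt.comp hcP).add
          (continuous_norm.continuousAt.comp hcQ)).tendsto.mono_left
          nhdsWithin_le_nhds
      refine le_of_tendsto hφ ?_
      have hmem : unitDisk ∈ 𝓝 (0:ℂ) := hopen.mem_nhds h0mem
      filter_upwards [self_mem_nhdsWithin, nhdsWithin_le_nhds hmem] with w hw0 hwd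
      -- nonzero case, proved below inline
      have hw0' : w ≠ 0 := hw0
      have hzpos : (0:ℝ) < ‖w‖ := norm_pos_iff.mpr hw0'
      have e1 := derivP h hh h0 w hwd hw0'
      have e2 := derivP g hg g0 w hwd hw0'
      rw [hP, hQ, e1, e2]
      rw [norm_div, norm_div, norm_neg, norm_neg, norm_pow]
      rw [← add_div, div_le_iff₀ (by positivity)]
      calc ‖h w - w * deriv h w‖ + ‖g w - w * deriv g w‖
          = ‖F w‖ + ‖G w‖ := rfl
        _ ≤ lam * ‖w‖ ^ 2 := bound1 w hwd
    · have hzpos : (0:ℝ) < ‖z‖ := norm_pos_iff.mpr hz0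
      have e1 := derivP h hh h0 z hz hz0
      have e2 := derivP g hg g0 z hz hz0
      rw [hP, hQ, e1, e2]
      rw [norm_div, norm_div, norm_neg, norm_neg, norm_pow]
      rw [← add_div, div_le_iff₀ (by positivity)]
      calc ‖h z - z * deriv h z‖ + ‖g z - z * deriv g z‖
          = ‖F z‖ + ‖G z‖ := rfl
        _ ≤ lam * ‖z‖ ^ 2 := bound1 z hz
  -- joint growth bound for P - 1 and Q
  have bound3 : ∀ z ∈ unitDisk,
      ‖P z - 1‖ + ‖Q z‖ ≤ lam * ‖z‖ := by
    intro z hz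
    obtain ⟨a, ha1, ha⟩ := exists_phase (P z - 1)
    obtain ⟨b, hb1, hbe⟩ := exists_phase (Q z)
    set K : ℂ → ℂ := fun w => a * (P w - 1) + b * Q w with hK
    have hdiffK : ∀ w ∈ unitDisk, DifferentiableAt ℂ K w := by
      intro w hw
      exact (((hPan w hw).differentiableAt.sub_const 1).const_mul a).add
        ((hQan w hw).differentiableAt.const_mul b)
    have hderivK : ∀ w ∈ unitDisk, ‖deriv K w‖ ≤ lam := by
      intro w hw
      have dP : DifferentiableAt ℂ (fun w => P w - 1) w :=
        (hPan w hw).differentiableAt.sub_const 1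
      have dQ : DifferentiableAt ℂ Q w := (hQan w hw).differentiableAt
      rw [hK, deriv_fun_add (dP.const_mul a) (dQ.const_mul b), deriv_const_mul a dP,
        deriv_const_mul b dQ]
      have eP : deriv (fun w => P w - 1) w = deriv P w := by
        simp [deriv_sub_const]
      rw [eP]
      calc ‖a * deriv P w + b * deriv Q w‖
          ≤ ‖a * deriv P w‖ + ‖b * deriv Q w‖ :=
            norm_add_le _ _
        _ = ‖deriv P w‖ + ‖deriv Q w‖ := by
            rw [norm_mul, norm_mul, ha1, hb1, one_mul, one_mul]
        _ ≤ lam := bound2 w hw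
    have := lipschitz_of_deriv_bound hconv hdiffK hderivK h0mem hz
    have hK0 : K 0 = 0 := by simp [hK, hP0, hQ0]
    have hKz : K z - K 0 = ((‖P z - 1‖ + ‖Q z‖ : ℝ) : ℂ) := by
      rw [hK0, sub_zero, hK]; push_cast; rw [ha, hbe]
    rw [hKz, sub_zero] at this
    rw [Complex.norm_real, Real.norm_eq_abs, _root_.abs_of_nonneg (by positivity)] at this
    simpa using this
  -- the pointwise derivative bound
  have bound4 : ∀ z ∈ unitDisk,
      ‖deriv h z‖ + ‖deriv g z‖ ≤ 1 + 2 * lam := by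
    intro z hz
    rcases eq_or_ne z 0 with rfl | hz0
    · rw [h'0, g'0]; simp; linarith
    · have hzpos : (0:ℝ) < ‖z‖ := norm_pos_iff.mpr hz0
      have hz1 : ‖z‖ < 1 := hz
      set r := ‖z‖ with hr
      have a1 : r * ‖deriv h z - 1‖ ≤
          ‖h z - z‖ + ‖F z‖ := by
        have e : z * (deriv h z - 1) = (h z - z) - F z := by rw [hF]; ring
        calc r * ‖deriv h z - 1‖ = ‖z * (deriv h z - 1)‖ := by
              rw [norm_mul]
          _ = ‖(h z - z) - F z‖ := by rw [e]
          _ ≤ _ := by simpa using norm_sub_le_norm_sub_add_norm_sub (h z - z) 0 (F z)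
      have a2 : r * ‖deriv g z‖ ≤ ‖g z‖ + ‖G z‖ := by
        have e : z * deriv g z = g z - G z := by rw [hG]; ring
        calc r * ‖deriv g z‖ = ‖z * deriv g z‖ := by rw [norm_mul]
          _ = ‖g z - G z‖ := by rw [e]
          _ ≤ _ := by simpa using norm_sub_le_norm_sub_add_norm_sub (g z) 0 (G z)
      have a3 : ‖h z - z‖ = r * ‖P z - 1‖ := by
        rw [hPval z hz0]
        rw [show z * P z - z = z * (P z - 1) by ring, norm_mul]
      have a4 : ‖g z‖ = r * ‖Q z‖ := by
        rw [hQval z hz0, norm_mul]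
      have b3 := bound3 z hz
      have b1 := bound1 z hz
      have key : r * (‖deriv h z - 1‖ + ‖deriv g z‖) ≤
          r * (2 * lam * r) := by
        calc r * (‖deriv h z - 1‖ + ‖deriv g z‖)
            ≤ (‖h z - z‖ + ‖g z‖) +
              (‖F z‖ + ‖G z‖) := by
              rw [mul_add]; linarith
          _ ≤ r * (lam * r) + lam * r ^ 2 := by
              rw [a3, a4]
              have : ‖P z - 1‖ + ‖Q z‖ ≤ lam * r := b3
              nlinarith [norm_nonneg (P z - 1), norm_nonneg (Q z)]
          _ = r * (2 * lam * r) := by ring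
      have key2 : ‖deriv h z - 1‖ + ‖deriv g z‖ ≤ 2 * lam * r :=
        le_of_mul_le_mul_left (by linarith [key]) hzpos
      have tri : ‖deriv h z‖ ≤ 1 + ‖deriv h z - 1‖ := by
        calc ‖deriv h z‖ = ‖1 + (deriv h z - 1)‖ := by ring_nf
          _ ≤ ‖1‖ + ‖deriv h z - 1‖ := norm_add_le _ _
          _ = 1 + ‖deriv h z - 1‖ := by rw [norm_one]
      have hrle : 2 * lam * r ≤ 2 * lam := by nlinarith
      linarith
  -- conclude
  have lip : ∀ z₁ ∈ unitDisk, ∀ z₂ ∈ unitDisk,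
      ‖(h z₁ + (starRingEnd ℂ) (g z₁)) - (h z₂ + (starRingEnd ℂ) (g z₂))‖ ≤
        (1 + 2 * lam) * ‖z₁ - z₂‖ := by
    intro z₁ h1 z₂ h2
    exact harm_lipschitz hconv (fun x hx => (hh x hx).differentiableAt)
      (fun x hx => (hg x hx).differentiableAt) bound4 h2 h1
  refine ⟨lip, ?_⟩
  have hlip : LipschitzOnWith (Real.toNNReal (1 + 2 * lam))
      (fun z => h z + (starRingEnd ℂ) (g z)) unitDisk := by
    rw [lipschitzOnWith_iff_dist_le_mul]
    intro x hx y hy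
    have := lip x hx y hy
    rw [Complex.dist_eq, Complex.dist_eq]
    calc ‖(h x + (starRingEnd ℂ) (g x)) - (h y + (starRingEnd ℂ) (g y))‖
        ≤ (1 + 2 * lam) * ‖x - y‖ := this
      _ = (Real.toNNReal (1 + 2 * lam) : ℝ) * ‖x - y‖ := by
          rw [Real.coe_toNNReal _ (by positivity)]
  exact hlip.uniformContinuousOn

end Main
end
end
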